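/- arXiv:1410.2272 — 8 statements merged into one kernel-verified Lean document; each statement's English description precedes it below -/
import Mathlib

section
/- If a profile P of strict linear orders is single-crossing with respect to a tree, then the strict majority relation of any profile composed of linear orders drawn (with arbitrary multiplicities) from the set of distinct orders appearing in P is transitive; that is, the set of distinct orders of P is a Condorcet domain. -/
def cutAt {V A : Type*} (T : SimpleGraph V) (P : V → A → A → Prop)
    (a b : A) (u v : V) : Prop :=
  T.Adj u v ∧
    {i | P i a b} = {w | (T.deleteEdges {s(u, v)}).Reachable u w} ∧
    {i | P i b a} = {w | (T.deleteEdges {s(u, v)}).Reachable v w}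

def SingleCrossing {V A : Type*} (T : SimpleGraph V) (P : V → A → A → Prop) : Prop :=
  ∀ a b : A, a ≠ b → ((∀ i, P i a b) ∨ (∀ i, P i b a) ∨ ∃ u v : V, cutAt T P a b u v)

def MinimalTree {V A : Type*} (T : SimpleGraph V) (P : V → A → A → Prop) : Prop :=
  ∀ u v : V, T.Adj u v → ∃ a b : A, cutAt T P a b u v

def SCLine {n : ℕ} {A : Type*} (P : Fin n → A → A → Prop) : Prop :=
  ∀ a b : A,
    (∀ s t : Fin n, s ≤ t → P s a b → P t a b) ∨
    (∀ s t : Fin n, s ≤ t → P t a b → P s a b)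



open SimpleGraph

private lemma bridge_not_reach {V : Type*} {T : SimpleGraph V} (hT : T.IsAcyclic)
    {u v : V} (h : T.Adj u v) : ¬ (T.deleteEdges {s(u,v)}).Reachable u v := by
  have h2 := isAcyclic_iff_forall_adj_isBridge.mp hT h
  rw [isBridge_iff] at h2
  exact h2

private lemma reach_or {V : Type*} {T : SimpleGraph V} (hc : T.Preconnected) {u v : V} (w : V) :
    (T.deleteEdges {s(u,v)}).Reachable u w ∨ (T.deleteEdges {s(u,v)}).Reachable v w := by
  obtain ⟨p⟩ := hc u w
  suffices h : ∀ {x w : V} (_ : T.Walk x w),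
      ((T.deleteEdges {s(u,v)}).Reachable u x ∨ (T.deleteEdges {s(u,v)}).Reachable v x) →
      ((T.deleteEdges {s(u,v)}).Reachable u w ∨ (T.deleteEdges {s(u,v)}).Reachable v w) by
    exact h p (Or.inl (Reachable.refl u))
  intro x w p
  induction p with
  | nil => exact id
  | @cons a bb cc hadj q ih =>
    intro hx
    apply ih
    by_cases he : s(a, bb) = s(u,v)
    · rw [Sym2.eq_iff] at he
      rcases he with ⟨rfl, rfl⟩ | ⟨rfl, rfl⟩
      · exact Or.inr (Reachable.refl _)
      · exact Or.inl (Reachable.refl _)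
    · have hadj' : (T.deleteEdges {s(u,v)}).Adj a bb := by simp [hadj, he]
      rcases hx with h | h
      · exact Or.inl (h.trans hadj'.reachable)
      · exact Or.inr (h.trans hadj'.reachable)

private lemma reach_partition {V : Type*} {T : SimpleGraph V} (hT : T.IsTree)
    {u v : V} (h : T.Adj u v) (w : V) :
    ((T.deleteEdges {s(u,v)}).Reachable u w ↔ ¬ (T.deleteEdges {s(u,v)}).Reachable v w) := by
  constructor
  · intro h1 h2
    exact bridge_not_reach hT.IsAcyclic h (h1.trans h2.symm)
  · intro h2
    rcases reach_or hT.isConnected.preconnected w with h1 | h1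
    · exact h1
    · exact absurd h1 h2

private lemma cross_edge {V : Type*} {T : SimpleGraph V} {u v p q : V}
    (hpq : T.Adj p q)
    (hp : (T.deleteEdges {s(u,v)}).Reachable u p)
    (hq : ¬ (T.deleteEdges {s(u,v)}).Reachable u q) : s(p,q) = s(u,v) := by
  by_contra hne
  exact hq (hp.trans (SimpleGraph.Adj.reachable (by simp [hpq, hne])))

private lemma walk_flip {V : Type*} {G : SimpleGraph V} (S : Set V) :
    ∀ {p q : V}, G.Walk p q → p ∈ S → q ∉ S →
    ∃ x y, G.Adj x y ∧ G.Reachable p x ∧ x ∈ S ∧ y ∉ S := by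
  intro p q w
  induction w with
  | nil => intro hp hq; exact absurd hp hq
  | @cons a bb cc hadj q ih =>
    intro hp hq
    by_cases hb : bb ∈ S
    · obtain ⟨x, y, h1, h2, h3, h4⟩ := ih hb hq
      exact ⟨x, y, h1, hadj.reachable.trans h2, h3, h4⟩
    · exact ⟨a, bb, hadj, Reachable.refl _, hp, hb⟩

private lemma reach_avoid {V : Type*} [DecidableEq V] {T : SimpleGraph V} {u v r : V}
    {f : Sym2 V}
    (h : ∀ z, (T.deleteEdges {f}).Reachable r z → z ≠ u ∧ z ≠ v)
    {w : V} (hw : (T.deleteEdges {f}).Reachable r w) :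
    (T.deleteEdges {s(u,v)}).Reachable r w := by
  obtain ⟨p⟩ := hw
  refine ⟨p.transfer _ ?_⟩
  intro e he
  induction e using Sym2.ind with
  | _ a b =>
    rw [mem_edgeSet _]
    have hTab : T.Adj a b := ((deleteEdges_adj).mp
      ((mem_edgeSet _).mp (p.edges_subset_edgeSet he))).1
    have ha : a ∈ p.support := p.fst_mem_support_of_mem_edges he
    have hra := h a ⟨p.takeUntil a ha⟩
    have hb : b ∈ p.support := p.snd_mem_support_of_mem_edges he
    have hrb := h b ⟨p.takeUntil b hb⟩
    rw [deleteEdges_adj]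
    refine ⟨hTab, ?_⟩
    rw [Set.mem_singleton_iff, Sym2.eq_iff]
    rintro (⟨rfl, rfl⟩ | ⟨rfl, rfl⟩)
    · exact hra.1 rfl
    · exact hra.2 rfl

private lemma noncross {V : Type*} [DecidableEq V] {T : SimpleGraph V} (hT : T.IsTree)
    {u v x y : V} (huv : T.Adj u v) (hxy : T.Adj x y) :
    {w | (T.deleteEdges {s(u,v)}).Reachable u w} ⊆ {w | (T.deleteEdges {s(x,y)}).Reachable x w} ∨
    {w | (T.deleteEdges {s(x,y)}).Reachable x w} ⊆ {w | (T.deleteEdges {s(u,v)}).Reachable u w} ∨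
    {w | (T.deleteEdges {s(u,v)}).Reachable u w} ∩ {w | (T.deleteEdges {s(x,y)}).Reachable x w} = ∅ ∨
    {w | (T.deleteEdges {s(u,v)}).Reachable u w} ∪ {w | (T.deleteEdges {s(x,y)}).Reachable x w} = Set.univ := by
  by_cases hef : s(u,v) = s(x,y)
  · rw [Sym2.eq_iff] at hef
    rcases hef with ⟨rfl, rfl⟩ | ⟨rfl, rfl⟩
    · exact Or.inl (subset_refl _)
    · -- u = y, v = x : A = reach of u with edge s(u,v); B = reach of v with edge s(v,u)
      refine Or.inr (Or.inr (Or.inl ?_))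
      ext w
      simp only [Set.mem_inter_iff, Set.mem_setOf_eq, Set.mem_empty_iff_false, iff_false, not_and]
      intro h1 h2
      rw [Sym2.eq_swap (a := v) (b := u)] at h2
      exact (reach_partition hT huv w).mp h1 h2
  · have hBadj : (T.deleteEdges {s(x,y)}).Adj u v := by
      simp [huv, hef]
    have hcases : ((T.deleteEdges {s(x,y)}).Reachable x u ↔ (T.deleteEdges {s(x,y)}).Reachable x v) := by
      constructor
      · intro h; exact h.trans hBadj.reachable
      · intro h; exact h.trans hBadj.symm.reachable
    by_cases hu : (T.deleteEdges {s(x,y)}).Reachable x u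
    · -- u, v ∈ B; use B' = reach of y
      have hv := hcases.mp hu
      have havoid : ∀ z, (T.deleteEdges {s(x,y)}).Reachable y z → z ≠ u ∧ z ≠ v := by
        intro z hz
        constructor
        · rintro rfl
          exact (reach_partition hT hxy z).mp hu hz
        · rintro rfl
          exact (reach_partition hT hxy z).mp hv hz
      rcases reach_or hT.isConnected.preconnected (u := u) (v := v) y with h1 | h1
      · -- B' ⊆ A, so A ∪ B = univ
        refine Or.inr (Or.inr (Or.inr ?_))
        ext w
        simp only [Set.mem_union, Set.mem_setOf_eq, Set.mem_univ, iff_true]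
        by_cases hwB : (T.deleteEdges {s(x,y)}).Reachable x w
        · exact Or.inr hwB
        · have hwB' : (T.deleteEdges {s(x,y)}).Reachable y w := by
            rcases reach_or hT.isConnected.preconnected (u := x) (v := y) w with h2 | h2
            · exact absurd h2 hwB
            · exact h2
          exact Or.inl (h1.trans (reach_avoid havoid hwB'))
      · -- B' ⊆ complement of A, so A ⊆ B
        refine Or.inl ?_
        intro w hw
        simp only [Set.mem_setOf_eq] at hw ⊢
        by_contra hwB
        have hwB' : (T.deleteEdges {s(x,y)}).Reachable y w := by
          rcases reach_or hT.isConnected.preconnected (u := x) (v := y) w with h2 | h2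
          · exact absurd h2 hwB
          · exact h2
        have : (T.deleteEdges {s(u,v)}).Reachable v w := h1.trans (reach_avoid havoid hwB')
        exact (reach_partition hT huv w).mp hw this
    · -- u, v ∉ B
      have hv : ¬ (T.deleteEdges {s(x,y)}).Reachable x v := fun h => hu (hcases.mpr h)
      have havoid : ∀ z, (T.deleteEdges {s(x,y)}).Reachable x z → z ≠ u ∧ z ≠ v := by
        intro z hz
        constructor
        · rintro rfl; exact hu hz
        · rintro rfl; exact hv hz
      rcases reach_or hT.isConnected.preconnected (u := u) (v := v) x with h1 | h1
      · -- B ⊆ A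
        refine Or.inr (Or.inl ?_)
        intro w hw
        simp only [Set.mem_setOf_eq] at hw ⊢
        exact h1.trans (reach_avoid havoid hw)
      · -- B ⊆ complement of A : A ∩ B = ∅
        refine Or.inr (Or.inr (Or.inl ?_))
        ext w
        simp only [Set.mem_inter_iff, Set.mem_setOf_eq, Set.mem_empty_iff_false, iff_false, not_and]
        intro hwA hwB
        exact (reach_partition hT huv w).mp hwA (h1.trans (reach_avoid havoid hwB))

private lemma endgame {V : Type*} [DecidableEq V] {T : SimpleGraph V} (hT : T.IsTree)
    {X Y Z : Set V} {u1 v1 u2 v2 u3 v3 : V}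
    (ha1 : T.Adj u1 v1) (ha2 : T.Adj u2 v2) (ha3 : T.Adj u3 v3)
    (hX : X = {w | (T.deleteEdges {s(u1,v1)}).Reachable u1 w})
    (hY : Y = {w | (T.deleteEdges {s(u2,v2)}).Reachable u2 w})
    (hYc : Yᶜ = {w | (T.deleteEdges {s(u2,v2)}).Reachable v2 w})
    (hZ : Z = {w | (T.deleteEdges {s(u3,v3)}).Reachable u3 w})
    (hZc : Zᶜ = {w | (T.deleteEdges {s(u3,v3)}).Reachable v3 w})
    (hXY : X ∩ Y ⊆ Zᶜ) (hYZ : Y ∩ Z ⊆ Xᶜ) (hZX : Z ∩ X ⊆ Yᶜ)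
    (hneXY : (X ∩ Y).Nonempty) (hneYZ : (Y ∩ Z).Nonempty) (hneZX : (Z ∩ X).Nonempty) :
    False := by
  -- disjointness of complements
  have hdYZ : Yᶜ ∩ Zᶜ = ∅ := by
    rcases noncross hT ha2 ha3 with hss | hss | hss | hss <;> rw [← hY, ← hZ] at hss
    · obtain ⟨i, hi1, hi2⟩ := hneXY
      exact absurd hi1 (hYZ ⟨hi2, hss hi2⟩)
    · obtain ⟨i, hi1, hi2⟩ := hneZX
      exact absurd hi1 (hXY ⟨hi2, hss hi1⟩)
    · obtain ⟨i, hi1, hi2⟩ := hneYZ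
      exact absurd (show i ∈ Y ∩ Z from ⟨hi1, hi2⟩) (by rw [hss]; exact Set.notMem_empty i)
    · rw [← Set.compl_union, hss, Set.compl_univ]
  -- get the points p ∈ Z ∩ X ⊆ Yᶜ and q ∈ X ∩ Y ⊆ Zᶜ
  obtain ⟨p, hpZ, hpX⟩ := hneZX
  have hpYc : p ∈ Yᶜ := hZX ⟨hpZ, hpX⟩
  obtain ⟨q, hqX, hqY⟩ := hneXY
  have hqZc : q ∈ Zᶜ := hXY ⟨hqX, hqY⟩
  have hqYc : q ∉ Yᶜ := fun h => h hqY
  -- walk from p to q inside X (in the graph with edge (u1,v1) deleted)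
  have hpr : (T.deleteEdges {s(u1,v1)}).Reachable u1 p := by rw [hX] at hpX; exact hpX
  have hqr : (T.deleteEdges {s(u1,v1)}).Reachable u1 q := by rw [hX] at hqX; exact hqX
  obtain ⟨w⟩ := hpr.symm.trans hqr
  obtain ⟨x, y, hxy, hreach, hxYc, hyYc⟩ := walk_flip Yᶜ w hpYc hqYc
  have hTxy : T.Adj x y := (SimpleGraph.deleteEdges_adj.mp hxy).1
  have hyY : y ∈ Y := Set.notMem_compl_iff.mp hyYc
  have hyX : y ∈ X := by
    rw [hX]
    exact hpr.trans (hreach.trans hxy.reachable)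
  have hyZc : y ∈ Zᶜ := hXY ⟨hyX, hyY⟩
  have hxZc : x ∉ Zᶜ := fun h => Set.eq_empty_iff_forall_notMem.mp hdYZ x ⟨hxYc, h⟩
  have hswap2 : s(v2, u2) = s(u2, v2) := Sym2.eq_swap
  have hswap3 : s(v3, u3) = s(u3, v3) := Sym2.eq_swap
  have he2 : s(x, y) = s(v2, u2) := by
    apply cross_edge hTxy
    · rw [hswap2]; rw [hYc] at hxYc; exact hxYc
    · rw [hswap2]; intro hcon; rw [hYc] at hyYc; exact hyYc hcon
  have he3 : s(y, x) = s(v3, u3) := by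
    apply cross_edge hTxy.symm
    · rw [hswap3]; rw [hZc] at hyZc; exact hyZc
    · rw [hswap3]; intro hcon; rw [hZc] at hxZc; exact hxZc hcon
  have heq : s(v2, u2) = s(v3, u3) := by
    rw [← he2, ← he3, Sym2.eq_swap]
  rw [Sym2.eq_iff] at heq
  rcases heq with ⟨h5, h6⟩ | ⟨h5, h6⟩
  · -- v2 = v3, u2 = u3 : Yᶜ = Zᶜ, contradiction with x
    subst h5; subst h6
    rw [← hYc] at hZc
    exact hxZc (hZc ▸ hxYc)
  · -- v2 = u3, u2 = v3 : Z = Yᶜ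
    subst h5; subst h6
    have hZY : Z = Yᶜ := by rw [hZ, hYc, hswap2]
    obtain ⟨i, hi1, hi2⟩ := hneYZ
    exact (hZY ▸ hi2) hi1


theorem stmt3 {n : ℕ} {A : Type*} (T : SimpleGraph (Fin n)) (hT : T.IsTree)
    (P : Fin n → A → A → Prop) (hP : ∀ i, IsStrictTotalOrder A (P i))
    (hsc : SingleCrossing T P)
    {m : ℕ} (Q : Fin m → A → A → Prop) (hQ : ∀ j, ∃ i, Q j = P i) :
    ∀ a b c : A,
      Nat.card {j : Fin m // Q j a b} > Nat.card {j : Fin m // Q j b a} →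
      Nat.card {j : Fin m // Q j b c} > Nat.card {j : Fin m // Q j c b} →
      Nat.card {j : Fin m // Q j a c} > Nat.card {j : Fin m // Q j c a} := by
  classical
  intro a b c h1 h2
  by_contra h3
  push_neg at h3
  choose f hf using hQ
  -- the counting measure ν on sets of voters
  set ν : Set (Fin n) → ℕ := fun S => (f ⁻¹' S : Set (Fin m)).ncard with hνdef
  have hcard : ∀ x y : A, Nat.card {j : Fin m // Q j x y} = ν {i | P i x y} := by
    intro x y
    have hrw : ν {i : Fin n | P i x y} = Nat.card (f ⁻¹' {i : Fin n | P i x y} : Set (Fin m)) :=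
      (Nat.card_coe_set_eq _).symm
    rw [hrw]
    exact Nat.card_congr (Equiv.subtypeEquivRight (fun j => by
      rw [hf j]; simp [Set.mem_preimage]))
  have hνmod : ∀ S R : Set (Fin n), ν (S ∪ R) + ν (S ∩ R) = ν S + ν R := by
    intro S R
    simpa [hνdef, Set.preimage_union, Set.preimage_inter] using
      Set.ncard_union_add_ncard_inter (f ⁻¹' S) (f ⁻¹' R) (Set.toFinite _) (Set.toFinite _)
  have hνcompl : ∀ S : Set (Fin n), ν S + ν Sᶜ = m := by
    intro S
    have h5 := Set.ncard_add_ncard_compl (f ⁻¹' S)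
    simpa [hνdef, Set.preimage_compl, Set.ncard_univ] using h5
  have hνpos : ∀ S : Set (Fin n), 0 < ν S → S.Nonempty := by
    intro S hS
    have hS0 : 0 < (f ⁻¹' S : Set (Fin m)).ncard := hS
    obtain ⟨j, hj⟩ := Set.nonempty_of_ncard_ne_zero hS0.ne'
    exact ⟨f j, hj⟩
  -- distinctness
  have hab : a ≠ b := by rintro rfl; exact lt_irrefl _ h1
  have hbc : b ≠ c := by rintro rfl; exact lt_irrefl _ h2
  have hac : a ≠ c := by rintro rfl; omega
  -- complements
  have hcompl : ∀ x y : A, x ≠ y → {i : Fin n | P i y x} = {i : Fin n | P i x y}ᶜ := by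
    intro x y hxy
    ext i
    haveI := hP i
    simp only [Set.mem_setOf_eq, Set.mem_compl_iff]
    constructor
    · intro h h'
      exact irrefl_of (P i) x (trans_of (P i) h' h)
    · intro h
      rcases trichotomous_of (P i) x y with h' | h' | h'
      · exact absurd h' h
      · exact absurd h' hxy
      · exact h'
  rw [hcard a b, hcard b a, hcompl a b hab] at h1
  rw [hcard b c, hcard c b, hcompl b c hbc] at h2
  rw [hcard a c, hcard c a, hcompl c a (Ne.symm hac)] at h3
  -- names for the three sets
  set X : Set (Fin n) := {i | P i a b} with hXdef
  set Y : Set (Fin n) := {i | P i b c} with hYdef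
  set Z : Set (Fin n) := {i | P i c a} with hZdef
  -- h1 : ν X > ν Xᶜ, h2 : ν Y > ν Yᶜ, h3 : ν Zᶜ ≤ ν Z
  -- tie-breaking voter i0 ∈ Z
  have hm1 : 1 ≤ m := by have := hνcompl X; omega
  have hZpos : 0 < ν Z := by have := hνcompl Z; omega
  obtain ⟨i0, hi0⟩ := hνpos Z hZpos
  set μ : Set (Fin n) → ℕ := fun S => 2 * ν S + (if i0 ∈ S then 1 else 0) with hμdef
  have hμcompl : ∀ S : Set (Fin n), μ S + μ Sᶜ = 2 * m + 1 := by
    intro S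
    have h5 := hνcompl S
    by_cases hh : i0 ∈ S <;> simp [hμdef, hh] <;> omega
  have hμmod : ∀ S R : Set (Fin n), μ (S ∪ R) + μ (S ∩ R) = μ S + μ R := by
    intro S R
    have h5 := hνmod S R
    by_cases hhS : i0 ∈ S <;> by_cases hhR : i0 ∈ R <;>
      simp [hμdef, hhS, hhR] <;> omega
  have hμpos : ∀ S : Set (Fin n), 0 < μ S → S.Nonempty := by
    intro S hS
    by_contra hne
    rw [Set.not_nonempty_iff_eq_empty] at hne
    subst hne
    simp [hμdef, hνdef] at hS
  have hμX : μ Xᶜ < μ X := by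
    by_cases hh : i0 ∈ X <;> simp [hμdef, hh] <;> omega
  have hμY : μ Yᶜ < μ Y := by
    by_cases hh : i0 ∈ Y <;> simp [hμdef, hh] <;> omega
  have hμZ : μ Zᶜ < μ Z := by
    have hh' : i0 ∉ Zᶜ := fun h => h hi0
    simp [hμdef, hi0, hh']
    omega
  -- pairwise intersections are nonempty
  have hpair : ∀ S R : Set (Fin n), μ Sᶜ < μ S → μ Rᶜ < μ R → (S ∩ R).Nonempty := by
    intro S R hS hR
    apply hμpos
    have h5 := hμcompl S
    have h6 := hμcompl R
    have h7 := hμmod S R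
    have h8 := hμcompl (S ∪ R)
    omega
  have hneXY : (X ∩ Y).Nonempty := hpair X Y hμX hμY
  have hneYZ : (Y ∩ Z).Nonempty := hpair Y Z hμY hμZ
  have hneZX : (Z ∩ X).Nonempty := hpair Z X hμZ hμX
  -- transitivity inclusions
  have hXY : X ∩ Y ⊆ Zᶜ := by
    rintro i ⟨hia, hib⟩
    intro hz
    haveI := hP i
    exact irrefl_of (P i) a (trans_of (P i) (trans_of (P i) hia hib) hz)
  have hYZ : Y ∩ Z ⊆ Xᶜ := by
    rintro i ⟨hib, hic⟩
    intro hx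
    haveI := hP i
    exact irrefl_of (P i) b (trans_of (P i) (trans_of (P i) hib hic) hx)
  have hZX : Z ∩ X ⊆ Yᶜ := by
    rintro i ⟨hic, hia⟩
    intro hy
    haveI := hP i
    exact irrefl_of (P i) c (trans_of (P i) (trans_of (P i) hic hia) hy)
  -- single-crossing case analysis
  rcases hsc a b hab with hall | hall | ⟨u1, v1, ha1, hX1, hX2⟩
  · obtain ⟨i, hi1, hi2⟩ := hneYZ
    exact (hYZ ⟨hi1, hi2⟩) (hall i)
  · obtain ⟨i, hi⟩ := hνpos X (by omega)
    haveI := hP i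
    exact irrefl_of (P i) a (trans_of (P i) hi (hall i))
  rcases hsc b c hbc with hall | hall | ⟨u2, v2, ha2, hY1, hY2⟩
  · obtain ⟨i, hi1, hi2⟩ := hneZX
    exact (hZX ⟨hi1, hi2⟩) (hall i)
  · obtain ⟨i, hi⟩ := hνpos Y (by omega)
    haveI := hP i
    exact irrefl_of (P i) b (trans_of (P i) hi (hall i))
  rcases hsc c a (Ne.symm hac) with hall | hall | ⟨u3, v3, ha3, hZ1, hZ2⟩
  · obtain ⟨i, hi1, hi2⟩ := hneXY
    exact (hXY ⟨hi1, hi2⟩) (hall i)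
  · haveI := hP i0
    exact irrefl_of (P i0) c (trans_of (P i0) hi0 (hall i0))
  -- assemble the cut data and finish
  exact endgame hT ha1 ha2 ha3
    hX1 hY1 ((hcompl b c hbc).symm.trans hY2) hZ1 ((hcompl c a (Ne.symm hac)).symm.trans hZ2)
    hXY hYZ hZX hneXY hneYZ hneZX
end

section
/- Let P = (P_1,...,P_n) be a profile of distinct linear orders single-crossing with respect to a tree T on n vertices, and let k_1,...,k_n be positive integers. Then the profile Q obtained by replicating each P_i exactly k_i times is single-crossing with respect to some tree on k_1+...+k_n vertices. -/
namespace SCHelp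

open SimpleGraph

variable {n : ℕ} (T : SimpleGraph (Fin n)) (k : Fin n → ℕ) (hk : ∀ i, 0 < k i)

/-- base vertex of block `i` -/
def z (i : Fin n) : Σ i : Fin n, Fin (k i) := ⟨i, ⟨0, hk i⟩⟩

/-- the blown-up tree: base vertices connected as in `T`, other vertices
attached as leaves to the base vertex of their block -/
def bigT : SimpleGraph (Σ i : Fin n, Fin (k i)) :=
  SimpleGraph.fromRel (fun p q =>
    (T.Adj p.1 q.1 ∧ p.2.1 = 0 ∧ q.2.1 = 0) ∨ (p.1 = q.1 ∧ (p.2.1 = 0 ∨ q.2.1 = 0)))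

lemma eq_z {p : Σ i : Fin n, Fin (k i)} (h : p.2.1 = 0) : p = z k hk p.1 := by
  obtain ⟨i, x⟩ := p
  have : x = ⟨0, hk i⟩ := Fin.ext h
  rw [z, this]

@[simp] lemma z_fst (i : Fin n) : (z k hk i).1 = i := rfl

@[simp] lemma z_snd (i : Fin n) : (z k hk i).2.1 = 0 := rfl

lemma adj_zz {i j : Fin n} (h : T.Adj i j) : (bigT T k).Adj (z k hk i) (z k hk j) := by
  rw [bigT, SimpleGraph.fromRel_adj]
  exact ⟨fun he => h.ne (congrArg Sigma.fst he), Or.inl (Or.inl ⟨h, rfl, rfl⟩)⟩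

lemma adj_z_self {p : Σ i : Fin n, Fin (k i)} (h : p.2.1 ≠ 0) :
    (bigT T k).Adj (z k hk p.1) p := by
  rw [bigT, SimpleGraph.fromRel_adj]
  refine ⟨fun he => h ?_, Or.inl (Or.inr ⟨rfl, Or.inl rfl⟩)⟩
  rw [← he]; rfl

lemma adj_cases {p q : Σ i : Fin n, Fin (k i)} (h : (bigT T k).Adj p q) :
    (T.Adj p.1 q.1 ∧ p.2.1 = 0 ∧ q.2.1 = 0) ∨ (p.1 = q.1 ∧ (p.2.1 = 0 ∨ q.2.1 = 0)) := by
  rw [bigT, SimpleGraph.fromRel_adj] at h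
  rcases h.2 with h' | h'
  · exact h'
  · rcases h' with ⟨ha, h1, h2⟩ | ⟨he, ho⟩
    · exact Or.inl ⟨ha.symm, h2, h1⟩
    · exact Or.inr ⟨he.symm, ho.symm⟩

lemma proj_reach {u v : Fin n} {p q : Σ i : Fin n, Fin (k i)}
    (w : ((bigT T k).deleteEdges {s(z k hk u, z k hk v)}).Walk p q) :
    (T.deleteEdges {s(u, v)}).Reachable p.1 q.1 := by
  induction w with
  | nil => exact SimpleGraph.Reachable.refl _
  | @cons p r q h _ ih =>
    rw [SimpleGraph.deleteEdges_adj] at h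
    obtain ⟨hadj, hne⟩ := h
    simp only [Set.mem_singleton_iff] at hne
    rcases adj_cases T k hadj with ⟨hT', h1, h2⟩ | ⟨he, _⟩
    · refine SimpleGraph.Reachable.trans (SimpleGraph.Adj.reachable ?_) ih
      rw [SimpleGraph.deleteEdges_adj]
      refine ⟨hT', ?_⟩
      simp only [Set.mem_singleton_iff]
      intro hco
      apply hne
      rw [eq_z k hk h1, eq_z k hk h2]
      rcases Sym2.eq_iff.mp hco with ⟨h3, h4⟩ | ⟨h3, h4⟩
      · rw [h3, h4]
      · rw [h3, h4]; exact Sym2.eq_swap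
    · rw [he]; exact ih

lemma lift_reach {u v : Fin n} {i j : Fin n}
    (w : (T.deleteEdges {s(u, v)}).Walk i j) :
    ((bigT T k).deleteEdges {s(z k hk u, z k hk v)}).Reachable (z k hk i) (z k hk j) := by
  induction w with
  | nil => exact SimpleGraph.Reachable.refl _
  | @cons i r j h _ ih =>
    rw [SimpleGraph.deleteEdges_adj] at h
    obtain ⟨hadj, hne⟩ := h
    simp only [Set.mem_singleton_iff] at hne
    refine SimpleGraph.Reachable.trans (SimpleGraph.Adj.reachable ?_) ih
    rw [SimpleGraph.deleteEdges_adj]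
    refine ⟨adj_zz T k hk hadj, ?_⟩
    simp only [Set.mem_singleton_iff]
    intro hco
    apply hne
    rcases Sym2.eq_iff.mp hco with ⟨h3, h4⟩ | ⟨h3, h4⟩
    · rw [show i = u from congrArg Sigma.fst h3, show r = v from congrArg Sigma.fst h4]
    · rw [show i = v from congrArg Sigma.fst h3, show r = u from congrArg Sigma.fst h4]
      exact Sym2.eq_swap

lemma lift_reach_full {i j : Fin n} (h : T.Reachable i j) :
    (bigT T k).Reachable (z k hk i) (z k hk j) := by
  obtain ⟨w⟩ := h
  induction w with
  | nil => exact SimpleGraph.Reachable.refl _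
  | cons h' _ ih => exact SimpleGraph.Reachable.trans (adj_zz T k hk h').reachable ih

lemma reach_base (p : Σ i : Fin n, Fin (k i)) : (bigT T k).Reachable (z k hk p.1) p := by
  by_cases h : p.2.1 = 0
  · rw [eq_z k hk h]; exact SimpleGraph.Reachable.refl _
  · exact (adj_z_self T k hk h).reachable

lemma reach_base_del {u v : Fin n} (p : Σ i : Fin n, Fin (k i)) :
    ((bigT T k).deleteEdges {s(z k hk u, z k hk v)}).Reachable (z k hk p.1) p := by
  by_cases h : p.2.1 = 0
  · rw [eq_z k hk h]; exact SimpleGraph.Reachable.refl _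
  · refine SimpleGraph.Adj.reachable ?_
    rw [SimpleGraph.deleteEdges_adj]
    refine ⟨adj_z_self T k hk h, ?_⟩
    simp only [Set.mem_singleton_iff]
    intro hco
    rcases Sym2.eq_iff.mp hco with ⟨h3, h4⟩ | ⟨h3, h4⟩
    · exact h (by rw [h4]; rfl)
    · exact h (by rw [h4]; rfl)

lemma key {u v : Fin n} (p : Σ i : Fin n, Fin (k i)) :
    ((bigT T k).deleteEdges {s(z k hk u, z k hk v)}).Reachable (z k hk u) p ↔
      (T.deleteEdges {s(u, v)}).Reachable u p.1 := by
  constructor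
  · intro h
    obtain ⟨w⟩ := h
    exact proj_reach T k hk w
  · intro h
    obtain ⟨w⟩ := h
    exact (lift_reach T k hk w).trans (reach_base_del T k hk p)

lemma not_reach_isolated {W : Type*} {G : SimpleGraph W} {p q : W}
    (h : ∀ r, ¬ G.Adj q r) (hpq : p ≠ q) : ¬ G.Reachable p q := by
  intro hr
  obtain ⟨w⟩ := hr.symm
  cases w with
  | nil => exact hpq rfl
  | cons h' _ => exact h _ h'

lemma isolated {q : Σ i : Fin n, Fin (k i)} (h : q.2.1 ≠ 0) (r : Σ i : Fin n, Fin (k i)) :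
    ¬ ((bigT T k).deleteEdges {s(z k hk q.1, q)}).Adj q r := by
  intro hadj
  rw [SimpleGraph.deleteEdges_adj] at hadj
  obtain ⟨hadj, hne⟩ := hadj
  rcases adj_cases T k hadj with ⟨_, h1, _⟩ | ⟨he, ho⟩
  · exact h h1
  · have hr : r.2.1 = 0 := ho.resolve_left h
    apply hne
    simp only [Set.mem_singleton_iff]
    have hrz : r = z k hk q.1 := by rw [eq_z k hk hr, he]
    rw [hrz]
    exact Sym2.eq_swap

include hk in
lemma bigT_isTree (hT : T.IsTree) : (bigT T k).IsTree := by
  constructor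
  · -- connected
    have hne : Nonempty (Fin n) := hT.isConnected.nonempty
    obtain ⟨i0⟩ := hne
    rw [SimpleGraph.connected_iff]
    refine ⟨fun p q => ?_, ⟨z k hk i0⟩⟩
    exact ((reach_base T k hk p).symm.trans
      (lift_reach_full T k hk (hT.isConnected.preconnected p.1 q.1))).trans
      (reach_base T k hk q)
  · -- acyclic
    rw [SimpleGraph.isAcyclic_iff_forall_adj_isBridge]
    intro p q hadj
    rw [SimpleGraph.isBridge_iff]
    rcases adj_cases T k hadj with ⟨hT', h1, h2⟩ | ⟨he, ho⟩
    · -- base-base edge: use that edges of T are bridges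
      intro hr
      rw [show ({s(p, q)} : Set _) =
        {s(z k hk p.1, z k hk q.1)} by
          rw [← eq_z k hk h1, ← eq_z k hk h2]] at hr
      obtain ⟨w⟩ := hr
      have := proj_reach T k hk (p := p) (q := q) (u := p.1) (v := q.1) w
      have hbr := (SimpleGraph.isAcyclic_iff_forall_adj_isBridge.mp hT.IsAcyclic hT')
      rw [SimpleGraph.isBridge_iff] at hbr
      exact hbr this
    · by_cases hq0 : q.2.1 = 0
      · -- then p is the leaf
        have hp0 : p.2.1 ≠ 0 := by
          intro hp0
          exact hadj.ne (by rw [eq_z k hk hp0, eq_z k hk hq0, he])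
        have hqz : q = z k hk p.1 := by rw [eq_z k hk hq0, he]
        intro hr
        refine not_reach_isolated (G := (bigT T k).deleteEdges {s(z k hk p.1, p)})
          (isolated T k hk hp0) hadj.ne.symm ?_
        rw [show ({s(z k hk p.1, p)} : Set _) = {s(p, q)} by rw [hqz]; rw [Sym2.eq_swap]]
        exact hr.symm
      · -- q is the leaf
        have hpz : p = z k hk q.1 := by
          rw [eq_z k hk (ho.resolve_right hq0), he]
        intro hr
        refine not_reach_isolated (G := (bigT T k).deleteEdges {s(z k hk q.1, q)})
          (isolated T k hk hq0) hadj.ne ?_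
        rw [show ({s(z k hk q.1, q)} : Set _) = {s(p, q)} by rw [hpz]]
        exact hr

end SCHelp

theorem stmt5 {n : ℕ} {A : Type*} (P : Fin n → A → A → Prop)
    (hP : ∀ i, IsStrictTotalOrder A (P i)) (hinj : Function.Injective P)
    (T : SimpleGraph (Fin n)) (hT : T.IsTree) (hsc : SingleCrossing T P)
    (k : Fin n → ℕ) (hk : ∀ i, 0 < k i) :
    ∃ T' : SimpleGraph (Σ i : Fin n, Fin (k i)),
      T'.IsTree ∧ SingleCrossing T' (fun p => P p.1) := by
  refine ⟨SCHelp.bigT T k, SCHelp.bigT_isTree T k hk hT, ?_⟩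
  intro a b hab
  rcases hsc a b hab with h | h | ⟨u, v, hadj, h1, h2⟩
  · exact Or.inl fun p => h p.1
  · exact Or.inr (Or.inl fun p => h p.1)
  · refine Or.inr (Or.inr ⟨SCHelp.z k hk u, SCHelp.z k hk v, SCHelp.adj_zz T k hk hadj, ?_, ?_⟩)
    · ext p
      simp only [Set.mem_setOf_eq]
      rw [SCHelp.key T k hk p]
      exact Set.ext_iff.mp h1 p.1
    · ext p
      simp only [Set.mem_setOf_eq]
      have key2 := SCHelp.key T k hk (u := v) (v := u) p
      rw [show s(SCHelp.z k hk v, SCHelp.z k hk u) = s(SCHelp.z k hk u, SCHelp.z k hk v) from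
        Sym2.eq_swap, show s(v, u) = s(u, v) from Sym2.eq_swap] at key2
      rw [key2]
      exact Set.ext_iff.mp h2 p.1
end

section
/- For every n ≥ 2, any profile over a set of alternatives A that is single-crossing with respect to the star graph S_n on n vertices with the star being a minimal tree must satisfy |A| ≥ n. -/
open Finset

/-- min of the vertex set of the edge system, with a junk default. -/
private noncomputable def minV {n : ℕ} {A : Type*} [LinearOrder A] [Nonempty A]
    (e : Fin n → A × A) (S : Finset (Fin n)) : A :=
  if h : ((S.image fun v => (e v).1) ∪ (S.image fun v => (e v).2)).Nonempty
  then ((S.image fun v => (e v).1) ∪ (S.image fun v => (e v).2)).min' h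
  else Classical.arbitrary A

private lemma core {n : ℕ} {A : Type*} [Nonempty A] [LinearOrder A]
    (Sp : A → A → Fin n → Prop)
    (hdir : ∀ x y v, Sp x y v → y < x)
    (hkey : ∀ x y c v w, Sp x c v → Sp y c w → v ≠ w → Sp x y v ∨ Sp y x w) :
    ∀ (m : ℕ) (e : Fin n → A × A) (S : Finset (Fin n)),
      (∀ v ∈ S, Sp (e v).1 (e v).2 v) → S.Nonempty →
      S.card * (n + 1) + (S.filter fun v => (e v).2 = minV e S).card ≤ m →
      S.card < ((S.image fun v => (e v).1) ∪ (S.image fun v => (e v).2)).card := by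
  intro m
  induction m with
  | zero =>
    intro e S hSp hne hm
    exfalso
    have h1 : 1 ≤ S.card := hne.card_pos
    have h2 : S.card * (n + 1) = 0 := by omega
    rcases Nat.mul_eq_zero.1 h2 with h | h <;> omega
  | succ m ih =>
    intro e S hSp hne hm
    obtain ⟨v0, hv0⟩ := hne
    have hne : S.Nonempty := ⟨v0, hv0⟩
    have hVne : ((S.image fun v => (e v).1) ∪ (S.image fun v => (e v).2)).Nonempty :=
      ⟨(e v0).1, mem_union_left _ (mem_image_of_mem _ hv0)⟩
    have hcdef : minV e S = ((S.image fun v => (e v).1) ∪ (S.image fun v => (e v).2)).min' hVne := by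
      unfold minV; exact dif_pos hVne
    set c := minV e S with hc
    have hminle : ∀ z ∈ ((S.image fun v => (e v).1) ∪ (S.image fun v => (e v).2)), c ≤ z :=
      fun z hz => hcdef ▸ Finset.min'_le _ _ hz
    have hcV : c ∈ ((S.image fun v => (e v).1) ∪ (S.image fun v => (e v).2)) :=
      hcdef ▸ Finset.min'_mem _ _
    have hmem1 : ∀ v ∈ S, (e v).1 ∈ ((S.image fun v => (e v).1) ∪ (S.image fun v => (e v).2)) :=
      fun v hv => mem_union_left _ (mem_image_of_mem _ hv)
    have hmem2 : ∀ v ∈ S, (e v).2 ∈ ((S.image fun v => (e v).1) ∪ (S.image fun v => (e v).2)) :=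
      fun v hv => mem_union_right _ (mem_image_of_mem _ hv)
    have h1 : ∀ v ∈ S, (e v).1 ≠ c := by
      intro v hv hEq
      exact absurd (hminle _ (hmem2 v hv)) (not_le.2 (hEq ▸ hdir _ _ _ (hSp v hv)))
    have h2 : ∃ v ∈ S, (e v).2 = c := by
      rcases mem_union.1 hcV with h | h
      · obtain ⟨v, hv, hv1⟩ := mem_image.1 h
        exact absurd hv1 (h1 v hv)
      · obtain ⟨v, hv, hv2⟩ := mem_image.1 h
        exact ⟨v, hv, hv2⟩
    have hcardn : S.card ≤ n := by
      have := Finset.card_le_card (Finset.subset_univ S)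
      simpa using this
    by_cases hDc : (S.filter fun v => (e v).2 = c).card ≤ 1
    -- degree-one case: erase the unique edge at c
    · obtain ⟨v, hvS, hv2⟩ := h2
      have hvDc : v ∈ S.filter fun v => (e v).2 = c := mem_filter.2 ⟨hvS, hv2⟩
      have huniq : ∀ w ∈ S, (e w).2 = c → w = v := by
        intro w hw hw2
        exact Finset.card_le_one.1 hDc _ (mem_filter.2 ⟨hw, hw2⟩) _ hvDc
      by_cases hS' : (S.erase v).Nonempty
      · have hSp' : ∀ w ∈ S.erase v, Sp (e w).1 (e w).2 w :=
          fun w hw => hSp w (Finset.mem_of_mem_erase hw)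
        have hcard' : (S.erase v).card = S.card - 1 := Finset.card_erase_of_mem hvS
        have hmeas : (S.erase v).card * (n + 1) +
            ((S.erase v).filter fun w => (e w).2 = minV e (S.erase v)).card ≤ m := by
          have hd : ((S.erase v).filter fun w => (e w).2 = minV e (S.erase v)).card ≤
              (S.erase v).card := Finset.card_le_card (Finset.filter_subset _ _)
          have h3 : 1 ≤ S.card := hne.card_pos
          have h4 : S.card * (n + 1) ≤ m + 1 := le_trans (Nat.le_add_right _ _) hm
          have h5 : (S.erase v).card ≤ n - 1 := by omega
          have hmul : (S.card - 1) * (n + 1) + 1 * (n + 1) = S.card * (n + 1) := by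
            rw [← Nat.add_mul]; congr 1; omega
          have : (S.card - 1) * (n + 1) + (S.card - 1) ≤ m := by omega
          calc (S.erase v).card * (n + 1) +
              ((S.erase v).filter fun w => (e w).2 = minV e (S.erase v)).card
              ≤ (S.card - 1) * (n+1) + (S.card - 1) := by
                rw [hcard']; omega
            _ ≤ m := this
        have hrec := ih e (S.erase v) hSp' hS' hmeas
        -- the vertex set of S.erase v avoids c and is ⊆ V
        have hsub : ((S.erase v).image fun w => (e w).1) ∪ ((S.erase v).image fun w => (e w).2) ⊆
            (((S.image fun w => (e w).1) ∪ (S.image fun w => (e w).2)).erase c) := by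
          intro z hz
          have hzV : z ∈ (S.image fun w => (e w).1) ∪ (S.image fun w => (e w).2) := by
            rcases mem_union.1 hz with h | h
            · obtain ⟨u, hu, hu1⟩ := mem_image.1 h
              exact mem_union_left _ (mem_image.2 ⟨u, Finset.mem_of_mem_erase hu, hu1⟩)
            · obtain ⟨u, hu, hu1⟩ := mem_image.1 h
              exact mem_union_right _ (mem_image.2 ⟨u, Finset.mem_of_mem_erase hu, hu1⟩)
          refine Finset.mem_erase.2 ⟨?_, hzV⟩
          intro hzc
          subst hzc
          rcases mem_union.1 hz with h | h
          · obtain ⟨u, hu, hu1⟩ := mem_image.1 h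
            exact h1 u (Finset.mem_of_mem_erase hu) hu1
          · obtain ⟨u, hu, hu1⟩ := mem_image.1 h
            have := huniq u (Finset.mem_of_mem_erase hu) hu1
            exact (Finset.ne_of_mem_erase hu) this
        have hcard2 : (((S.erase v).image fun w => (e w).1) ∪
            ((S.erase v).image fun w => (e w).2)).card ≤
            ((S.image fun w => (e w).1) ∪ (S.image fun w => (e w).2)).card - 1 := by
          have := Finset.card_le_card hsub
          rwa [Finset.card_erase_of_mem hcV] at this
        have h3 : 1 ≤ S.card := hne.card_pos
        omega
      · -- S = {v}
        have hSv : S = {v} := by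
          apply Finset.eq_singleton_iff_unique_mem.2
          refine ⟨hvS, fun w hw => ?_⟩
          by_contra hwv
          exact hS' ⟨w, Finset.mem_erase.2 ⟨hwv, hw⟩⟩
        have hne12 : (e v).2 ≠ (e v).1 := ne_of_lt (hdir _ _ _ (hSp v hvS))
        rw [hSv]
        simp only [Finset.image_singleton, Finset.card_singleton]
        apply Finset.one_lt_card.2
        refine ⟨(e v).1, by simp, (e v).2, by simp, hne12.symm⟩
    -- degree ≥ 2 case: merge two edges at c
    · push_neg at hDc
      obtain ⟨v, hv, w, hw, hvw⟩ := Finset.one_lt_card.1 hDc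
      obtain ⟨hvS, hv2⟩ := mem_filter.1 hv
      obtain ⟨hwS, hw2⟩ := mem_filter.1 hw
      have hSpv : Sp (e v).1 c v := hv2 ▸ hSp v hvS
      have hSpw : Sp (e w).1 c w := hw2 ▸ hSp w hwS
      have step : ∀ v w : Fin n, v ∈ S → w ∈ S → v ≠ w → (e v).2 = c → (e w).2 = c →
          Sp (e v).1 (e w).1 v →
          S.card < ((S.image fun u => (e u).1) ∪ (S.image fun u => (e u).2)).card := by
        clear hv2 hw2 hvS hwS hvw hSpv hSpw hv hw v w
        intro v w hvS hwS hvw hv2 hw2 hSpnew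
        set e' := Function.update e v ((e v).1, (e w).1) with he'
        have he'v : e' v = ((e v).1, (e w).1) := Function.update_self _ _ _
        have he'ne : ∀ u : Fin n, u ≠ v → e' u = e u := fun u hu => Function.update_of_ne hu _ _
        have hSp' : ∀ u ∈ S, Sp (e' u).1 (e' u).2 u := by
          intro u hu
          by_cases huv : u = v
          · rw [huv, he'v]; exact hSpnew
          · rw [he'ne u huv]; exact hSp u hu
        -- new vertex set is contained in old, and c is still in it
        have hsub : ((S.image fun u => (e' u).1) ∪ (S.image fun u => (e' u).2)) ⊆
            ((S.image fun u => (e u).1) ∪ (S.image fun u => (e u).2)) := by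
          intro z hz
          simp only [mem_union, mem_image] at hz ⊢
          rcases hz with ⟨u, hu, hu1⟩ | ⟨u, hu, hu1⟩
          · by_cases huv : u = v
            · rw [huv, he'v] at hu1
              exact Or.inl ⟨v, hvS, hu1⟩
            · rw [he'ne u huv] at hu1
              exact Or.inl ⟨u, hu, hu1⟩
          · by_cases huv : u = v
            · rw [huv, he'v] at hu1
              exact Or.inl ⟨w, hwS, hu1⟩
            · rw [he'ne u huv] at hu1
              exact Or.inr ⟨u, hu, hu1⟩
        have hcV' : c ∈ ((S.image fun u => (e' u).1) ∪ (S.image fun u => (e' u).2)) := by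
          simp only [mem_union, mem_image]
          exact Or.inr ⟨w, hwS, by rw [he'ne w (Ne.symm hvw)]; exact hw2⟩
        have hVne' : ((S.image fun u => (e' u).1) ∪ (S.image fun u => (e' u).2)).Nonempty :=
          ⟨c, hcV'⟩
        have hc' : minV e' S = c := by
          unfold minV
          rw [dif_pos hVne']
          apply le_antisymm
          · exact Finset.min'_le _ _ hcV'
          · exact Finset.le_min' _ _ _ fun z hz => hminle z (hsub hz)
        -- new degree at c has dropped
        have hfil : (S.filter fun u => (e' u).2 = minV e' S) =
            (S.filter fun u => (e u).2 = c).erase v := by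
          rw [hc']
          ext u
          simp only [Finset.mem_filter, Finset.mem_erase]
          constructor
          · rintro ⟨huS, hu2⟩
            by_cases huv : u = v
            · exfalso
              rw [huv, he'v] at hu2
              have hlt := hdir _ _ _ (hSp w hwS)
              rw [hw2] at hlt
              have hu2' : (e w).1 = c := hu2
              rw [hu2'] at hlt
              exact lt_irrefl _ hlt
            · rw [he'ne u huv] at hu2
              exact ⟨huv, huS, hu2⟩
          · rintro ⟨huv, huS, hu2⟩
            rw [he'ne u huv]
            exact ⟨huS, hu2⟩
        have hmeas : S.card * (n + 1) + (S.filter fun u => (e' u).2 = minV e' S).card ≤ m := by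
          rw [hfil]
          have hvDc : v ∈ S.filter fun u => (e u).2 = c := mem_filter.2 ⟨hvS, hv2⟩
          rw [Finset.card_erase_of_mem hvDc]
          have h3 : 1 ≤ (S.filter fun u => (e u).2 = c).card := Finset.card_pos.2 ⟨v, hvDc⟩
          omega
        have hrec := ih e' S hSp' hne hmeas
        have := Finset.card_le_card hsub
        omega
      rcases hkey (e v).1 (e w).1 c v w hSpv hSpw hvw with h | h
      · exact step v w hvS hwS hvw hv2 hw2 h
      · exact step w v hwS hvS (Ne.symm hvw) hw2 hv2 h

theorem stmt8 {n : ℕ} (hn : 2 ≤ n) {A : Type*} [Fintype A]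
    (P : Fin n → A → A → Prop) (hP : ∀ i, IsStrictTotalOrder A (P i))
    (hsc : SingleCrossing (SimpleGraph.fromRel fun i (_ : Fin n) => i = ⟨0, by omega⟩) P)
    (hmin : MinimalTree (SimpleGraph.fromRel fun i (_ : Fin n) => i = ⟨0, by omega⟩) P) :
    n ≤ Fintype.card A := by
  classical
  set T : SimpleGraph (Fin n) :=
    SimpleGraph.fromRel fun i (_ : Fin n) => i = ⟨0, by omega⟩ with hT
  set z : Fin n := ⟨0, by omega⟩ with hz
  -- adjacency in the star
  have hadj : ∀ u v : Fin n, T.Adj u v ↔ u ≠ v ∧ (u = z ∨ v = z) := by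
    intro u v
    rw [hT, SimpleGraph.fromRel_adj]
  -- a leaf is isolated after deleting its edge
  have hreach_leaf : ∀ ℓ : Fin n, ℓ ≠ z → ∀ w,
      (T.deleteEdges {s(z, ℓ)}).Reachable ℓ w → w = ℓ := by
    intro ℓ hℓ w hr
    have hnon : ∀ x, ¬ (T.deleteEdges {s(z, ℓ)}).Adj ℓ x := by
      intro x hx
      rw [SimpleGraph.deleteEdges_adj] at hx
      obtain ⟨ha, hs⟩ := hx
      rw [hadj] at ha
      obtain ⟨hne, h2 | h2⟩ := ha
      · exact hℓ h2
      · subst h2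
        exact hs (by rw [Sym2.eq_swap]; rfl)
    obtain ⟨p⟩ := hr
    cases p with
    | nil => rfl
    | cons h' p' => exact absurd h' (hnon _)
  have hreach0 : ∀ ℓ : Fin n, ℓ ≠ z → ∀ w,
      (T.deleteEdges {s(z, ℓ)}).Reachable z w ↔ w ≠ ℓ := by
    intro ℓ hℓ w
    constructor
    · intro hr hwℓ
      rw [hwℓ] at hr
      exact hℓ (hreach_leaf ℓ hℓ z hr.symm).symm
    · intro hw
      by_cases hwz : w = z
      · subst hwz; exact SimpleGraph.Reachable.refl _
      · apply SimpleGraph.Adj.reachable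
        rw [SimpleGraph.deleteEdges_adj]
        refine ⟨(hadj z w).2 ⟨fun h => hwz h.symm, Or.inl rfl⟩, ?_⟩
        intro hmem
        rw [Set.mem_singleton_iff, Sym2.congr_right] at hmem
        exact hw hmem
  -- the special-pair predicate
  set Sp : A → A → Fin n → Prop := fun x y v => v ≠ z ∧ ∀ i, P i x y ↔ i ≠ v with hSpdef
  -- classification of cuts
  have hcut : ∀ a b u u', cutAt T P a b u u' → ∃ ℓ, Sp a b ℓ ∨ Sp b a ℓ := by
    intro a b u u' hc
    obtain ⟨hadj', hab, hba⟩ := hc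
    rw [hadj] at hadj'
    obtain ⟨huu, h2 | h2⟩ := hadj'
    · subst h2
      have hu' : u' ≠ z := fun h => huu h.symm
      refine ⟨u', Or.inl ⟨hu', fun i => ?_⟩⟩
      have hi := Set.ext_iff.1 hab i
      simp only [Set.mem_setOf_eq] at hi
      rw [hi]
      exact hreach0 u' hu' i
    · subst h2
      have hsingl : ({s(u, z)} : Set (Sym2 (Fin n))) = {s(z, u)} := by
        rw [Sym2.eq_swap]
      rw [hsingl] at hab hba
      refine ⟨u, Or.inr ⟨huu, fun i => ?_⟩⟩
      have hi := Set.ext_iff.1 hba i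
      simp only [Set.mem_setOf_eq] at hi
      rw [hi]
      exact hreach0 u huu i
  -- pairs from minimality
  have hpairs : ∀ v : Fin n, v ≠ z → ∃ ab : A × A, Sp ab.1 ab.2 v := by
    intro v hv
    obtain ⟨a, b, hc⟩ := hmin z v ((hadj z v).2 ⟨fun h => hv h.symm, Or.inl rfl⟩)
    obtain ⟨hadj', hab, hba⟩ := hc
    refine ⟨(a, b), hv, fun i => ?_⟩
    have hi := Set.ext_iff.1 hab i
    simp only [Set.mem_setOf_eq] at hi
    rw [hi]
    exact hreach0 v hv i
  -- A is nonempty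
  have h1z : (⟨1, by omega⟩ : Fin n) ≠ z := by
    intro h
    have := congrArg Fin.val h
    simp [hz] at this
  obtain ⟨ab0, hab0⟩ := hpairs ⟨1, by omega⟩ h1z
  haveI : Nonempty A := ⟨ab0.1⟩
  -- linear order on A from voter z's preferences
  haveI hPz := hP z
  haveI : IsStrictTotalOrder A (Function.swap (P z)) := IsStrictTotalOrder.swap _
  letI : DecidableRel (Function.swap (P z)) := fun a b => Classical.dec _
  letI : LinearOrder A := linearOrderOfSTO (Function.swap (P z))
  have hdir : ∀ x y v, Sp x y v → y < x := by
    intro x y v hs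
    show Function.swap (P z) y x
    exact (hs.2 z).2 (Ne.symm hs.1)
  have hkey : ∀ x y c v w, Sp x c v → Sp y c w → v ≠ w → Sp x y v ∨ Sp y x w := by
    intro x y c v w hsv hsw hvw
    obtain ⟨hvz, hvd⟩ := hsv
    obtain ⟨hwz, hwd⟩ := hsw
    have hxc : P z x c := (hvd z).2 (Ne.symm hvz)
    have hxc_ne : x ≠ c := by
      intro h; subst h; exact (hP z).irrefl x hxc
    have hyc_ne : y ≠ c := by
      intro h; subst h; exact (hP z).irrefl y ((hwd z).2 (Ne.symm hwz))
    -- voter v prefers y over x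
    have hvcx : P v c x := by
      have hnvxc : ¬ P v x c := fun h => (not_ne_iff.2 rfl) ((hvd v).1 h)
      rcases (show P v c x ∨ c = x ∨ P v x c by by_contra hh; push_neg at hh; exact hh.2.1 ((hP v).trichotomous c x hh.1 hh.2.2)) with h | h | h
      · exact h
      · exact absurd h.symm hxc_ne
      · exact absurd h hnvxc
    have hvyc : P v y c := (hwd v).2 hvw
    have hvyx : P v y x := (hP v).trans _ _ _ hvyc hvcx
    -- voter w prefers x over y
    have hwcy : P w c y := by
      have hnwyc : ¬ P w y c := fun h => (not_ne_iff.2 rfl) ((hwd w).1 h)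
      rcases (show P w c y ∨ c = y ∨ P w y c by by_contra hh; push_neg at hh; exact hh.2.1 ((hP w).trichotomous c y hh.1 hh.2.2)) with h | h | h
      · exact h
      · exact absurd h.symm hyc_ne
      · exact absurd h hnwyc
    have hwxc : P w x c := (hvd w).2 (Ne.symm hvw)
    have hwxy : P w x y := (hP w).trans _ _ _ hwxc hwcy
    have hasymm : ∀ i a b, P i a b → ¬ P i b a := fun i a b h h' =>
      (hP i).irrefl a ((hP i).trans _ _ _ h h')
    rcases hsc x y (by intro h; subst h; exact (hP v).irrefl _ hvyx) with hall | hall | ⟨u, u', hcxy⟩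
    · exact absurd (hall v) (hasymm v y x hvyx)
    · exact absurd (hall w) (hasymm w x y hwxy)
    · obtain ⟨ℓ, hsp | hsp⟩ := hcut x y u u' hcxy
      · left
        have hvℓ : v = ℓ := by
          by_contra hne
          exact hasymm v y x hvyx ((hsp.2 v).2 hne)
        exact hvℓ ▸ hsp
      · right
        have hwℓ : w = ℓ := by
          by_contra hne
          exact hasymm w x y hwxy ((hsp.2 w).2 hne)
        exact hwℓ ▸ hsp
  -- assemble
  set e : Fin n → A × A := fun v =>
    if h : v ≠ z then Classical.choose (hpairs v h) else Classical.arbitrary _ with he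
  set S : Finset (Fin n) := ({z}ᶜ : Finset (Fin n)) with hS
  have hSmem : ∀ v : Fin n, v ∈ S ↔ v ≠ z := by
    intro v
    simp [hS]
  have hSp : ∀ v ∈ S, Sp (e v).1 (e v).2 v := by
    intro v hv
    have hv' : v ≠ z := (hSmem v).1 hv
    have hev : e v = Classical.choose (hpairs v hv') := by
      rw [he]; exact dif_pos hv'
    rw [hev]
    exact Classical.choose_spec (hpairs v hv')
  have hSne : S.Nonempty := ⟨⟨1, by omega⟩, (hSmem _).2 h1z⟩
  have hfin := core Sp hdir hkey
    (S.card * (n + 1) + (S.filter fun v => (e v).2 = minV e S).card) e S hSp hSne le_rfl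
  have hcards : S.card = n - 1 := by
    rw [hS]
    rw [Finset.card_compl]
    simp
  have hle : ((S.image fun v => (e v).1) ∪ (S.image fun v => (e v).2)).card ≤ Fintype.card A :=
    Finset.card_le_univ _
  omega
end

section
/- Let P be a reduced profile (all voters have pairwise distinct linear orders) that is single-crossing with respect to some tree. Then the minimal tree with respect to which P is single-crossing is unique. -/
lemma set_eq_mp {α : Type*} {Q : α → Prop} {S : Set α} (h : {i | Q i} = S) {x : α}
    (hx : x ∈ S) : Q x := by rw [← h] at hx; exact hx

lemma set_eq_mpr {α : Type*} {Q : α → Prop} {S : Set α} (h : {i | Q i} = S) {x : α}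
    (hx : Q x) : x ∈ S := by rw [← h]; exact hx

lemma cutAt_swap {V A : Type*} {T : SimpleGraph V} {P : V → A → A → Prop}
    {a b : A} {u v : V} (h : cutAt T P a b u v) : cutAt T P b a v u := by
  obtain ⟨h1, h2, h3⟩ := h
  refine ⟨h1.symm, ?_, ?_⟩ <;> rw [Sym2.eq_swap (a := v)]
  · exact h3
  · exact h2

lemma mem_of_support {V : Type*} [DecidableEq V] {G : SimpleGraph V} {a b x : V} (w : G.Walk a b)
    (hx : x ∈ w.support) : G.Reachable a x :=
  (w.takeUntil x hx).reachable

lemma aux {n : ℕ} {A : Type*} {P : Fin n → A → A → Prop}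
    (hP : ∀ i, IsStrictTotalOrder A (P i))
    {T₁ T₂ : SimpleGraph (Fin n)}
    (hsc₁ : SingleCrossing T₁ P) (hmin₂ : MinimalTree T₂ P)
    {a b : A} {u v u' v' : Fin n}
    (h1 : cutAt T₁ P a b u v) (h2 : cutAt T₂ P a b u' v') : u' = u := by
  by_contra hne
  have asymm : ∀ (i : Fin n) (x y : A), P i x y → P i y x → False := by
    intro i x y hxy hyx
    haveI := hP i
    exact irrefl_of (P i) x (trans_of (P i) hxy hyx)
  obtain ⟨hadj1, hS1, hT1⟩ := h1
  obtain ⟨hadj2, hS2, hT2⟩ := h2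
  -- basic membership facts
  have hPuab : P u a b := by
    have : u ∈ {w | (T₁.deleteEdges {s(u, v)}).Reachable u w} := SimpleGraph.Reachable.refl u
    rw [← hS1] at this; exact this
  have hPvba : P v b a := by
    have : v ∈ {w | (T₁.deleteEdges {s(u, v)}).Reachable v w} := SimpleGraph.Reachable.refl v
    rw [← hT1] at this; exact this
  have hPu'ab : P u' a b := by
    have : u' ∈ {w | (T₂.deleteEdges {s(u', v')}).Reachable u' w} := SimpleGraph.Reachable.refl u'
    rw [← hS2] at this; exact this
  have hPv'ba : P v' b a := by
    have : v' ∈ {w | (T₂.deleteEdges {s(u', v')}).Reachable v' w} := SimpleGraph.Reachable.refl v'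
    rw [← hT2] at this; exact this
  set G₂ := T₂.deleteEdges {s(u', v')} with hG₂
  have hreach_u : G₂.Reachable u' u := by
    have : u ∈ {i | P i a b} := hPuab
    rw [hS2] at this; exact this
  have hreach_v : G₂.Reachable v' v := by
    have : v ∈ {i | P i b a} := hPvba
    rw [hT2] at this; exact this
  -- take a path from u to u' in G₂, get its first edge u-y
  obtain ⟨w0⟩ := hreach_u.symm
  obtain ⟨q, hq⟩ := w0.toPath
  -- q : G₂.Walk u u', hq : q.IsPath
  cases q with
  | nil => exact hne rfl
  | @cons _ y _ hadj_uy q' =>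
    rw [SimpleGraph.Walk.cons_isPath_iff] at hq
    obtain ⟨hq', hu_not⟩ := hq
    have hTadj_uy : T₂.Adj u y := by
      have h := hadj_uy
      rw [hG₂, SimpleGraph.deleteEdges_adj] at h
      exact h.1
    set F := T₂.deleteEdges {s(u, y)} with hF
    have htrans : ∀ {p q : Fin n} (w : G₂.Walk p q), u ∉ w.support →
        ∀ e ∈ w.edges, e ∈ F.edgeSet := by
      intro p q w hu e he
      have he2 : e ∈ T₂.edgeSet :=
        SimpleGraph.edgeSet_mono (SimpleGraph.deleteEdges_le _) (w.edges_subset_edgeSet he)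
      rw [hF, SimpleGraph.edgeSet_deleteEdges]
      refine ⟨he2, ?_⟩
      intro hmem
      rw [Set.mem_singleton_iff] at hmem
      subst hmem
      exact hu (w.fst_mem_support_of_mem_edges he)
    have hA : F.Reachable y u' := (q'.transfer F (htrans q' hu_not)).reachable
    obtain ⟨w2⟩ := hreach_v
    have hu_not2 : u ∉ w2.support := by
      intro hmem
      have hru : G₂.Reachable v' u := mem_of_support w2 hmem
      exact asymm u a b hPuab (set_eq_mp hT2 hru)
    have hB : F.Reachable v' v := (w2.transfer F (htrans w2 hu_not2)).reachable
    have hne_edge : s(u', v') ≠ s(u, y) := by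
      intro h
      rcases Sym2.eq_iff.mp h with ⟨h1, h2⟩ | ⟨h1, h2⟩
      · exact hne h1
      · exact asymm u a b hPuab (h2 ▸ hPv'ba)
    have hF_adj : F.Adj u' v' := by
      rw [hF, SimpleGraph.deleteEdges_adj]
      exact ⟨hadj2, by simpa using hne_edge⟩
    have hyv : F.Reachable y v := hA.trans (hF_adj.reachable.trans hB)
    obtain ⟨c, d, hcut⟩ := hmin₂ u y hTadj_uy
    obtain ⟨_, hSc, hSd⟩ := hcut
    have hPucd : P u c d := set_eq_mp hSc (SimpleGraph.Reachable.refl u)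
    have hPu'dc : P u' d c := set_eq_mp hSd hA
    have hPvdc : P v d c := set_eq_mp hSd hyv
    rcases hsc₁ c d (fun hcd => by subst hcd; exact asymm u c c hPucd hPucd) with hall | hall | ⟨x', y', hx⟩
    · exact asymm v c d (hall v) hPvdc
    · exact asymm u c d hPucd (hall u)
    obtain ⟨hadjx, hSx, hSy⟩ := hx
    have hreach_x'u : (T₁.deleteEdges {s(x', y')}).Reachable x' u :=
      set_eq_mpr hSx hPucd
    by_cases hEq : s(x', y') = s(u, v)
    · rcases Sym2.eq_iff.mp hEq with ⟨hxu, hyv'⟩ | ⟨hxv, hyu⟩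
      · subst hxu; subst hyv'
        exact asymm u' c d (set_eq_mp hSx (set_eq_mpr hS1 hPu'ab)) hPu'dc
      · have hx'cd : P x' c d := set_eq_mp hSx (SimpleGraph.Reachable.refl x')
        rw [hxv] at hx'cd
        exact asymm v c d hx'cd hPvdc
    · have hadjuv' : (T₁.deleteEdges {s(x', y')}).Adj u v := by
        rw [SimpleGraph.deleteEdges_adj]
        refine ⟨hadj1, ?_⟩
        simp only [Set.mem_singleton_iff]
        exact fun h => hEq h.symm
      exact asymm v c d (set_eq_mp hSx (hreach_x'u.trans hadjuv'.reachable)) hPvdc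

theorem stmt10 {n : ℕ} {A : Type*} (P : Fin n → A → A → Prop)
    (hP : ∀ i, IsStrictTotalOrder A (P i)) (hinj : Function.Injective P)
    (T₁ T₂ : SimpleGraph (Fin n)) (hT₁ : T₁.IsTree) (hT₂ : T₂.IsTree)
    (hsc₁ : SingleCrossing T₁ P) (hmin₁ : MinimalTree T₁ P)
    (hsc₂ : SingleCrossing T₂ P) (hmin₂ : MinimalTree T₂ P) :
    T₁ = T₂ := by
  have asymm : ∀ (i : Fin n) (x y : A), P i x y → P i y x → False := by
    intro i x y hxy hyx
    haveI := hP i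
    exact irrefl_of (P i) x (trans_of (P i) hxy hyx)
  have key : ∀ (S₁ S₂ : SimpleGraph (Fin n)), SingleCrossing S₁ P → MinimalTree S₁ P →
      SingleCrossing S₂ P → MinimalTree S₂ P → ∀ u v, S₁.Adj u v → S₂.Adj u v := by
    intro S₁ S₂ hsc₁ hmin₁ hsc₂ hmin₂ u v hadj
    obtain ⟨a, b, hcut⟩ := hmin₁ u v hadj
    have hPuab : P u a b := set_eq_mp hcut.2.1 (SimpleGraph.Reachable.refl u)
    have hPvba : P v b a := set_eq_mp hcut.2.2 (SimpleGraph.Reachable.refl v)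
    rcases hsc₂ a b (fun hab => by subst hab; exact asymm u a a hPuab hPuab) with hall | hall | ⟨u', v', hcut'⟩
    · exact absurd (hall v) (fun h => asymm v a b h hPvba)
    · exact absurd (hall u) (fun h => asymm u b a h hPuab)
    have hu : u' = u := aux hP hsc₁ hmin₂ hcut hcut'
    have hv : v' = v := aux hP hsc₁ hmin₂ (cutAt_swap hcut) (cutAt_swap hcut')
    rw [hu, hv] at hcut'
    exact hcut'.1
  ext u v
  exact ⟨key T₁ T₂ hsc₁ hmin₁ hsc₂ hmin₂ u v, key T₂ T₁ hsc₂ hmin₂ hsc₁ hmin₁ u v⟩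
end

section
/- In a reduced profile P single-crossing with respect to a minimal tree T, a voter i is a leaf of T if and only if i is a potential leaf of P, i.e., (a) the set S_i of ordered pairs (a,b) with a ≻_i b and b ≻_j a for all j ≠ i is nonempty, and (b) there exists another voter k such that voters i and k agree on all pairs (a,b) with neither (a,b) nor (b,a) in S_i. -/
def PotentialLeaf {V A : Type*} (P : V → A → A → Prop) (i : V) : Prop :=
  (∃ a b : A, P i a b ∧ ∀ j, j ≠ i → P j b a) ∧
  (∃ k, k ≠ i ∧ ∀ a b : A,
    ¬(P i a b ∧ ∀ j, j ≠ i → P j b a) →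
    ¬(P i b a ∧ ∀ j, j ≠ i → P j a b) →
    (P i a b ↔ P k a b))

/-- If `j` is the unique neighbor of `i`, then after deleting the edge `i-j`
the component of `i` is just `{i}`. -/
lemma leaf_comp {V : Type*} (T : SimpleGraph V) (i j : V)
    (huniq : ∀ y, T.Adj i y → y = j) :
    ∀ w, (T.deleteEdges {s(i, j)}).Reachable i w → w = i := by
  intro w h
  obtain ⟨p⟩ := h
  cases p with
  | nil => rfl
  | cons h' p' =>
    exfalso
    rw [SimpleGraph.deleteEdges_adj] at h'
    have hx := huniq _ h'.1
    subst hx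
    exact h'.2 rfl

theorem stmt14 {n : ℕ} {A : Type*} (T : SimpleGraph (Fin n)) (hT : T.IsTree)
    (P : Fin n → A → A → Prop) (hP : ∀ i, IsStrictTotalOrder A (P i))
    (hinj : Function.Injective P)
    (hsc : SingleCrossing T P) (hmin : MinimalTree T P) (i : Fin n) :
    (∃! j, T.Adj i j) ↔ PotentialLeaf P i := by
  have asym : ∀ (x : Fin n) (a b : A), P x a b → P x b a → False := by
    intro x a b h1 h2
    haveI := hP x
    exact irrefl_of (P x) a (trans_of (P x) h1 h2)
  have tricho : ∀ (x : Fin n) (a b : A), P x a b ∨ a = b ∨ P x b a := by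
    intro x a b
    haveI := hP x
    exact trichotomous_of (P x) a b
  constructor
  · rintro ⟨j, hadj, huniq⟩
    have hcomp := leaf_comp T i j huniq
    -- key disagreement lemma
    have key : ∀ a b : A, P i a b → P j b a →
        (P i a b ∧ ∀ j', j' ≠ i → P j' b a) := by
      intro a b hia hjb
      rcases hsc a b (fun e => asym i a b hia (e ▸ hia)) with hall | hall | ⟨u, v, huv, hcu, hcv⟩
      · exact absurd (hall j) (fun h => asym j a b h hjb)
      · exact absurd (hall i) (fun h => asym i a b hia h)
      · have hiu : (T.deleteEdges {s(u, v)}).Reachable u i := by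
          have : i ∈ {w | (T.deleteEdges {s(u, v)}).Reachable u w} := hcu ▸ hia
          exact this
        have hjv : (T.deleteEdges {s(u, v)}).Reachable v j := by
          have : j ∈ {w | (T.deleteEdges {s(u, v)}).Reachable v w} := hcv ▸ hjb
          exact this
        have hedge : s(u, v) = s(i, j) := by
          by_contra hne
          have hij' : (T.deleteEdges {s(u, v)}).Adj i j := by
            rw [SimpleGraph.deleteEdges_adj]
            exact ⟨hadj, fun h => hne (Set.mem_singleton_iff.mp h).symm⟩
          have huvr : (T.deleteEdges {s(u, v)}).Reachable u v :=
            (hiu.trans hij'.reachable).trans hjv.symm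
          have hv1 : P v a b := by
            have : v ∈ {i | P i a b} := hcu ▸ huvr
            exact this
          have hv2 : P v b a := by
            have : v ∈ {i | P i b a} := hcv ▸ SimpleGraph.Reachable.refl v
            exact this
          exact asym v a b hv1 hv2
        rcases Sym2.eq_iff.mp hedge with ⟨hu, hv⟩ | ⟨hu, hv⟩
        · rw [hu, hv] at hcu hcv
          refine ⟨hia, fun j' hj' => ?_⟩
          have hnot : ¬ P j' a b := by
            intro h
            have : j' ∈ {w | (T.deleteEdges {s(i, j)}).Reachable i w} := hcu ▸ h
            exact hj' (hcomp j' this)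
          rcases tricho j' a b with h | h | h
          · exact absurd h hnot
          · exact absurd (h ▸ hia) (fun hh => asym i a a hh hh)
          · exact h
        · rw [hu, hv] at hcu hcv
          exfalso
          have : P i b a := by
            have : i ∈ {w | (T.deleteEdges {s(j, i)}).Reachable i w} :=
              SimpleGraph.Reachable.refl i
            exact (hcv ▸ this : i ∈ {w | P w b a})
          exact asym i a b hia this
    obtain ⟨a, b, hcut⟩ := hmin i j hadj
    have hia : P i a b := by
      have : i ∈ {i | P i a b} :=
        hcut.2.1 ▸ (SimpleGraph.Reachable.refl i : _)
      exact this
    have hrest : ∀ j', j' ≠ i → P j' b a := by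
      intro j' hj'
      have hnot : ¬ P j' a b := by
        intro h
        have : j' ∈ {w | (T.deleteEdges {s(i, j)}).Reachable i w} := hcut.2.1 ▸ h
        exact hj' (hcomp j' this)
      rcases tricho j' a b with h | h | h
      · exact absurd h hnot
      · exact absurd (h ▸ hia) (fun hh => asym i a a hh hh)
      · exact h
    refine ⟨⟨a, b, hia, hrest⟩, j, hadj.ne', fun a' b' h1 h2 => ?_⟩
    constructor
    · intro hi'
      by_contra hj'
      have hab : a' ≠ b' := fun e => asym i a' b' hi' (e ▸ hi')
      rcases tricho j a' b' with h | h | h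
      · exact hj' h
      · exact hab h
      · exact h1 (key a' b' hi' h)
    · intro hj'
      by_contra hi'
      have hab : a' ≠ b' := fun e => asym j a' b' hj' (e ▸ hj')
      rcases tricho i a' b' with h | h | h
      · exact hi' h
      · exact hab h
      · exact h2 (key b' a' h hj')
  · rintro ⟨⟨a, b, hia, hrest⟩, k, hk, -⟩
    rcases hsc a b (fun e => asym i a b hia (e ▸ hia)) with hall | hall | ⟨u, v, huv, hcu, hcv⟩
    · exact absurd (hall k) (fun h => asym k a b h (hrest k hk))
    · exact absurd (hall i) (fun h => asym i a b hia h)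
    · have hset : {w | P w a b} = {i} := by
        ext w
        simp only [Set.mem_setOf_eq, Set.mem_singleton_iff]
        constructor
        · intro hw
          by_contra hwi
          exact asym w a b hw (hrest w hwi)
        · intro hw; exact hw ▸ hia
      have hreach : {w | (T.deleteEdges {s(u, v)}).Reachable u w} = {i} :=
        hcu ▸ hset
      have hui : u = i := by
        have : u ∈ ({i} : Set (Fin n)) :=
          hreach ▸ (SimpleGraph.Reachable.refl u : _)
        exact this
      subst hui
      refine ⟨v, huv, fun y hy => ?_⟩
      by_contra hne
      have hadj' : (T.deleteEdges {s(u, v)}).Adj u y := by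
        rw [SimpleGraph.deleteEdges_adj]
        refine ⟨hy, ?_⟩
        intro h
        rcases Sym2.eq_iff.mp (Set.mem_singleton_iff.mp h) with ⟨_, h2⟩ | ⟨h1, h2⟩
        · exact hne h2
        · exact huv.ne (h1 ▸ rfl)
      have : y ∈ ({u} : Set (Fin n)) := hreach ▸ hadj'.reachable
      exact hy.ne' this
end

section
/- Let P = (P_1,...,P_n) be a profile and suppose voter i is a potential leaf of P. Then P is single-crossing with respect to some tree if and only if the subprofile P_{-i} (P with voter i removed) is single-crossing with respect to some tree. -/
open SimpleGraph

section helpers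
namespace SC15aux

lemma transfer_reach {V W : Type*} {G : SimpleGraph V} {H : SimpleGraph W} (f : V → W) (s : Set V)
    (hf : ∀ ⦃x y : V⦄, x ∈ s → y ∈ s → G.Adj x y → H.Adj (f x) (f y)) :
    ∀ {u v : V} (p : G.Walk u v), (∀ x ∈ p.support, x ∈ s) → H.Reachable (f u) (f v) := by
  intro u v p
  induction p with
  | nil => exact fun _ => Reachable.refl _
  | @cons u x v h q ih =>
    intro hs
    have hu : u ∈ s := hs _ (SimpleGraph.Walk.start_mem_support _)
    have hx : x ∈ s := hs _ (by simp [SimpleGraph.Walk.support_cons])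
    exact (hf hu hx h).reachable.trans
      (ih fun y hy => hs y (by rw [SimpleGraph.Walk.support_cons]; exact List.mem_cons_of_mem _ hy))

lemma path_avoids {V : Type*} {G : SimpleGraph V} {i v0 : V} (hnb : ∀ x, G.Adj i x → x = v0) :
    ∀ {u w : V} (p : G.Walk u w), p.IsPath → u ≠ i → w ≠ i → i ∉ p.support := by
  intro u w p
  induction p with
  | nil =>
    intro _ hu _
    simp only [SimpleGraph.Walk.support_nil, List.mem_singleton]
    exact fun h => hu h.symm
  | @cons u x w h q ih =>
    intro hp hu hw hmem
    rw [SimpleGraph.Walk.support_cons, List.mem_cons] at hmem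
    rcases hmem with h1 | hmem
    · exact hu h1.symm
    by_cases hx : x = i
    · have hu0 : u = v0 := hnb u (hx ▸ h).symm
      cases q with
      | nil =>
        -- x = w
        exact hw (hx ▸ rfl)
      | @cons _ y _ h2 r =>
        have hy : y = v0 := hnb y (hx ▸ h2)
        have hnd := hp.support_nodup
        simp only [SimpleGraph.Walk.support_cons, List.nodup_cons, List.mem_cons] at hnd
        exact hnd.1 (Or.inr (by rw [hu0, ← hy]; exact r.start_mem_support))
    · exact ih hp.of_cons hx hw hmem

lemma reach_cover {V : Type*} {G : SimpleGraph V} (u v : V) :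
    ∀ {a w : V} (p : G.Walk a w),
      ((G.deleteEdges {s(u,v)}).Reachable u a ∨ (G.deleteEdges {s(u,v)}).Reachable v a) →
      ((G.deleteEdges {s(u,v)}).Reachable u w ∨ (G.deleteEdges {s(u,v)}).Reachable v w) := by
  intro a w p
  induction p with
  | nil => exact id
  | @cons a x w h q ih =>
    intro ha
    apply ih
    by_cases he : s(a, x) = s(u, v)
    · rw [Sym2.eq_iff] at he
      rcases he with ⟨rfl, rfl⟩ | ⟨rfl, rfl⟩
      · exact Or.inr (Reachable.refl _)
      · exact Or.inl (Reachable.refl _)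
    · have hadj : (G.deleteEdges {s(u,v)}).Adj a x := by
        rw [SimpleGraph.deleteEdges_adj]
        exact ⟨h, by simpa using he⟩
      rcases ha with h1 | h1
      · exact Or.inl (h1.trans hadj.reachable)
      · exact Or.inr (h1.trans hadj.reachable)

lemma no_cycle_at {V : Type*} {G : SimpleGraph V} {i v0 : V} (hnb : ∀ x, G.Adj i x → x = v0)
    (c : G.Walk i i) (hc : c.IsCycle) : False := by
  cases c with
  | nil => exact hc.ne_nil rfl
  | @cons _ x _ h p =>
    have hx : x = v0 := hnb x h
    have hiv : i ≠ x := h.ne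
    obtain ⟨y, h2, r, hr⟩ := SimpleGraph.Walk.exists_eq_cons_of_ne hiv p.reverse
    have hy : y = x := (hnb y h2).trans hx.symm
    subst hy
    have hnd : p.support.Nodup := by simpa using hc.support_nodup
    have hps : p.support = (SimpleGraph.Walk.cons h2 r).support.reverse := by
      rw [← hr, SimpleGraph.Walk.support_reverse, List.reverse_reverse]
    cases r with
    | nil =>
      have hl : p.length = 1 := by
        have h3 : p.reverse.length = 1 := by rw [hr]; simp
        simpa using h3
      have h4 := hc.three_le_length
      rw [SimpleGraph.Walk.length_cons, hl] at h4
      omega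
    | @cons _ z _ h3 t =>
      rw [hps, List.nodup_reverse] at hnd
      simp only [SimpleGraph.Walk.support_cons, List.nodup_cons, List.mem_cons] at hnd
      exact hnd.2.1 t.end_mem_support

lemma exists_lift_walk {V : Type*} {G : SimpleGraph V} {i : V} :
    ∀ {u w : V} (p : G.Walk u w) (hu : u ≠ i) (hw : w ≠ i),
      (∀ x ∈ p.support, x ≠ i) →
      ∃ q : (G.comap (Subtype.val : {j : V // j ≠ i} → V)).Walk ⟨u, hu⟩ ⟨w, hw⟩,
        q.map (SimpleGraph.Hom.comap Subtype.val G) = p := by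
  intro u w p
  induction p with
  | nil =>
    intro hu hw _
    exact ⟨SimpleGraph.Walk.nil, rfl⟩
  | @cons u x w h q ih =>
    intro hu hw hs
    have hx : x ≠ i := hs x (by simp [SimpleGraph.Walk.support_cons])
    obtain ⟨d, hd⟩ := ih hx hw
      (fun y hy => hs y (by rw [SimpleGraph.Walk.support_cons]; exact List.mem_cons_of_mem _ hy))
    have hadj : (G.comap (Subtype.val : {j : V // j ≠ i} → V)).Adj ⟨u, hu⟩ ⟨x, hx⟩ := h
    refine ⟨SimpleGraph.Walk.cons hadj d, ?_⟩
    rw [SimpleGraph.Walk.map_cons, hd]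
    rfl

lemma reach_comap_iff {V : Type*} {G : SimpleGraph V} {i v0 : V} (hnb : ∀ x, G.Adj i x → x = v0)
    {u w : V} (hu : u ≠ i) (hw : w ≠ i) :
    (G.comap (Subtype.val : {j : V // j ≠ i} → V)).Reachable ⟨u, hu⟩ ⟨w, hw⟩ ↔ G.Reachable u w := by
  classical
  constructor
  · intro h
    exact h.map (SimpleGraph.Hom.comap Subtype.val G)
  · intro h
    obtain ⟨p⟩ := h
    have hp := p.toPath.2
    have havoid := path_avoids hnb p.toPath.1 hp hu hw
    obtain ⟨q, _⟩ := exists_lift_walk p.toPath.1 hu hw (fun x hx hxi => havoid (hxi ▸ hx))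
    exact ⟨q⟩

lemma comap_deleteEdges {V : Type*} (T : SimpleGraph V) {i u v : V} (hu : u ≠ i) (hv : v ≠ i) :
    (T.deleteEdges {s(u,v)}).comap (Subtype.val : {j : V // j ≠ i} → V)
      = (T.comap Subtype.val).deleteEdges
          {s((⟨u,hu⟩ : {j : V // j ≠ i}), (⟨v,hv⟩ : {j : V // j ≠ i}))} := by
  ext x y
  have key : s(x,y) = s((⟨u,hu⟩ : {j : V // j ≠ i}), (⟨v,hv⟩ : {j : V // j ≠ i}))
      ↔ s(x.1, y.1) = s(u,v) := by
    rw [Sym2.eq_iff, Sym2.eq_iff]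
    simp [Subtype.ext_iff]
  simp only [SimpleGraph.comap_adj, SimpleGraph.deleteEdges_adj, Set.mem_singleton_iff]
  rw [key]

lemma mem_reach_del_comap_iff {V : Type*} {T : SimpleGraph V} {i u v w : V}
    (hu : u ≠ i) (hv : v ≠ i) (hw : w ≠ i) {v0 : V} (hnbT : ∀ x, T.Adj i x → x = v0)
    (x : {j : V // j ≠ i}) :
    ((T.comap (Subtype.val : {j : V // j ≠ i} → V)).deleteEdges
        {s((⟨u,hu⟩ : {j : V // j ≠ i}), (⟨v,hv⟩ : {j : V // j ≠ i}))}).Reachable ⟨w,hw⟩ x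
      ↔ (T.deleteEdges {s(u,v)}).Reachable w x.1 := by
  rw [← comap_deleteEdges T hu hv]
  have hnb : ∀ z, (T.deleteEdges {s(u,v)}).Adj i z → z = v0 := fun z hz =>
    hnbT z ((SimpleGraph.deleteEdges_adj).mp hz).1
  exact reach_comap_iff hnb hw x.2

lemma reach_leaf_iff {V : Type*} {G : SimpleGraph V} {i k : V} (hnb : ∀ x, G.Adj i x → x = k)
    (hik : G.Adj i k) {u : V} (hu : u ≠ i) : G.Reachable u i ↔ G.Reachable u k := by
  constructor
  · intro h
    obtain ⟨p⟩ := h.symm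
    cases p with
    | nil => exact absurd rfl hu
    | @cons _ x _ hh q =>
      have hxk : x = k := hnb x hh
      subst hxk
      exact q.reachable.symm
  · intro h
    exact h.trans hik.symm.reachable

end SC15aux

def attachLeaf {V : Type*} (i : V) (T' : SimpleGraph {j : V // j ≠ i}) (k : V) (hk : k ≠ i) :
    SimpleGraph V where
  Adj x y := (∃ hx : x ≠ i, ∃ hy : y ≠ i, T'.Adj ⟨x, hx⟩ ⟨y, hy⟩) ∨ (x = i ∧ y = k) ∨ (x = k ∧ y = i)
  symm := by
    constructor
    rintro x y (⟨hx, hy, h⟩ | ⟨h1, h2⟩ | ⟨h1, h2⟩)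
    · exact Or.inl ⟨hy, hx, h.symm⟩
    · exact Or.inr (Or.inr ⟨h2, h1⟩)
    · exact Or.inr (Or.inl ⟨h2, h1⟩)
  loopless := by
    constructor
    rintro x (⟨hx, hy, h⟩ | ⟨h1, h2⟩ | ⟨h1, h2⟩)
    · exact T'.loopless.irrefl _ h
    · exact hk (h2.symm.trans h1)
    · exact hk (h1.symm.trans h2)

end helpers

open SC15aux in
theorem stmt15 {V A : Type*} [Fintype V]
    (P : V → A → A → Prop) (hP : ∀ i, IsStrictTotalOrder A (P i))
    (i : V) (hpl : PotentialLeaf P i) :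
    (∃ T : SimpleGraph V, T.IsTree ∧ SingleCrossing T P) ↔
      (∃ T' : SimpleGraph {j : V // j ≠ i}, T'.IsTree ∧
        SingleCrossing T' (fun j => P j.1)) := by
  classical
  obtain ⟨⟨a0, b0, ha0, hb0⟩, k, hk, hkag⟩ := hpl
  have asymP : ∀ j (a b : A), P j a b → ¬P j b a := fun j a b h h' =>
    by haveI := hP j; exact irrefl_of (P j) a (trans_of (P j) h h')
  constructor
  · rintro ⟨T, hT, hsc⟩
    obtain ⟨u0, v0, hadj0, hA0, hB0⟩ : ∃ u v, cutAt T P a0 b0 u v := by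
      rcases hsc a0 b0 (fun h => by subst h; exact asymP i a0 a0 ha0 ha0) with h | h | h
      · exact absurd (h k) (asymP k b0 a0 (hb0 k hk))
      · exact absurd (h i) (asymP i a0 b0 ha0)
      · exact h
    have hSi : {w | P w a0 b0} = {i} := by
      ext w
      simp only [Set.mem_setOf_eq, Set.mem_singleton_iff]
      constructor
      · intro hw
        by_contra hwi
        exact asymP w b0 a0 (hb0 w hwi) hw
      · rintro rfl; exact ha0
    have hSni : {w | P w b0 a0} = {w | w ≠ i} := by
      ext w
      simp only [Set.mem_setOf_eq]
      constructor
      · intro hw hwi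
        exact asymP w b0 a0 hw (hwi ▸ ha0)
      · exact fun hw => hb0 w hw
    rw [hSi] at hA0
    rw [hSni] at hB0
    have hu0 : u0 = i := by
      have h1 : u0 ∈ {w | (T.deleteEdges {s(u0, v0)}).Reachable u0 w} := Reachable.refl _
      rw [← hA0] at h1
      exact h1
    rw [hu0] at hadj0 hA0 hB0
    have hv0i : v0 ≠ i := hadj0.ne'
    have hnbT : ∀ x, T.Adj i x → x = v0 := by
      intro x hx
      by_contra hxv
      have hne : (s(i, x) : Sym2 V) ≠ s(i, v0) := by
        intro heq
        rw [Sym2.eq_iff] at heq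
        rcases heq with ⟨_, h2⟩ | ⟨_, h2⟩
        · exact hxv h2
        · exact hx.ne' h2
      have hdadj : (T.deleteEdges {s(i, v0)}).Adj i x := by
        rw [SimpleGraph.deleteEdges_adj]
        exact ⟨hx, by simpa using hne⟩
      have hmem : x ∈ ({i} : Set V) := by rw [hA0]; exact hdadj.reachable
      exact hx.ne' (by simpa using hmem)
    have hnb0 : ∀ z, (T.deleteEdges {s(i, v0)}).Adj i z → z = v0 := fun z hz =>
      hnbT z ((SimpleGraph.deleteEdges_adj).mp hz).1
    have hcompi : ∀ w, (T.deleteEdges {s(i, v0)}).Reachable i w → w = i := by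
      intro w hw
      have hmem : w ∈ ({i} : Set V) := by rw [hA0]; exact hw
      simpa using hmem
    refine ⟨T.comap (Subtype.val : {j : V // j ≠ i} → V), ⟨?_, ?_⟩, ?_⟩
    · -- Connected
      have hreach : ∀ x : {j : V // j ≠ i},
          (T.comap (Subtype.val : {j : V // j ≠ i} → V)).Reachable ⟨v0, hv0i⟩ x := by
        intro x
        have hx : (T.deleteEdges {s(i, v0)}).Reachable v0 x.1 := by
          have hmem : x.1 ∈ {w | (T.deleteEdges {s(i, v0)}).Reachable v0 w} := by
            rw [← hB0]; exact x.2
          exact hmem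
        have h2 := (reach_comap_iff hnb0 hv0i x.2).mpr hx
        have hle : (T.deleteEdges {s(i, v0)}).comap (Subtype.val : {j : V // j ≠ i} → V) ≤
            T.comap (Subtype.val : {j : V // j ≠ i} → V) := by
          intro a b hab
          exact ((SimpleGraph.deleteEdges_adj).mp hab).1
        exact Reachable.mono hle h2
      haveI : Nonempty {j : V // j ≠ i} := ⟨⟨v0, hv0i⟩⟩
      exact ⟨fun x y => (hreach x).symm.trans (hreach y)⟩
    · -- IsAcyclic
      intro x c hc
      have hinj : Function.Injective
          (SimpleGraph.Hom.comap (Subtype.val : {j : V // j ≠ i} → V) T) :=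
        fun a b hab => Subtype.ext hab
      exact hT.2 _ (hc.map hinj)
    · -- SingleCrossing
      intro a b hab
      rcases hsc a b hab with h | h | ⟨u, v, huv, hA, hB⟩
      · exact Or.inl fun x => h x.1
      · exact Or.inr (Or.inl fun x => h x.1)
      by_cases hui : u = i
      · rw [hui] at huv hA hB
        have hv : v = v0 := hnbT v huv
        subst hv
        refine Or.inr (Or.inl fun x => ?_)
        have hcov := reach_cover (G := T) i v (((hT.1.preconnected v x.1)).some)
          (Or.inr (Reachable.refl _))
        rcases hcov with h1 | h1
        · exact absurd (hcompi _ h1) x.2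
        · have hmem : x.1 ∈ {w | P w b a} := by rw [hB]; exact h1
          exact hmem
      · by_cases hvi : v = i
        · rw [hvi] at huv hA hB
          have hu' : u = v0 := hnbT u huv.symm
          subst hu'
          rw [show (s(u, i) : Sym2 V) = s(i, u) from Sym2.eq_swap] at hA hB
          refine Or.inl fun x => ?_
          have hcov := reach_cover (G := T) i u (((hT.1.preconnected u x.1)).some)
            (Or.inr (Reachable.refl _))
          rcases hcov with h1 | h1
          · exact absurd (hcompi _ h1) x.2
          · have hmem : x.1 ∈ {w | P w a b} := by rw [hA]; exact h1
            exact hmem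
        · refine Or.inr (Or.inr ⟨⟨u, hui⟩, ⟨v, hvi⟩, ?_, ?_, ?_⟩)
          · exact huv
          · ext x
            simp only [Set.mem_setOf_eq]
            rw [mem_reach_del_comap_iff hui hvi hui hnbT x]
            exact Set.ext_iff.mp hA x.1
          · ext x
            simp only [Set.mem_setOf_eq]
            rw [mem_reach_del_comap_iff hui hvi hvi hnbT x]
            exact Set.ext_iff.mp hB x.1
  · rintro ⟨T', hT', hsc'⟩
    have hcm : (attachLeaf i T' k hk).comap (Subtype.val : {j : V // j ≠ i} → V) = T' := by
      ext x y
      simp only [SimpleGraph.comap_adj]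
      constructor
      · rintro (⟨hx, hy, h⟩ | ⟨h1, _⟩ | ⟨_, h2⟩)
        · exact h
        · exact absurd h1 x.2
        · exact absurd h2 y.2
      · intro h
        exact Or.inl ⟨x.2, y.2, h⟩
    have hnbB : ∀ x, (attachLeaf i T' k hk).Adj i x → x = k := by
      rintro x (⟨hx, _, _⟩ | ⟨_, h2⟩ | ⟨h1, _⟩)
      · exact absurd rfl hx
      · exact h2
      · exact absurd h1.symm hk
    have hadjik : (attachLeaf i T' k hk).Adj i k := Or.inr (Or.inl ⟨rfl, rfl⟩)
    rw [← hcm] at hsc'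
    have hconn' : ((attachLeaf i T' k hk).comap (Subtype.val : {j : V // j ≠ i} → V)).Connected := by
      rw [hcm]; exact hT'.1
    have hreachi : ∀ x : V, (attachLeaf i T' k hk).Reachable x i := by
      intro x
      by_cases hx : x = i
      · rw [hx]
      · have h2 := hconn'.preconnected ⟨x, hx⟩ ⟨k, hk⟩
        have h3 := h2.map (SimpleGraph.Hom.comap Subtype.val (attachLeaf i T' k hk))
        exact h3.trans hadjik.symm.reachable
    have hconnB : (attachLeaf i T' k hk).Connected := by
      haveI : Nonempty V := ⟨i⟩
      exact ⟨fun x y => (hreachi x).trans (hreachi y).symm⟩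
    have hacy : (attachLeaf i T' k hk).IsAcyclic := by
      intro x c hc
      by_cases hix : i ∈ c.support
      · exact no_cycle_at hnbB (c.rotate i hix) (hc.rotate hix)
      · have hxne : x ≠ i := fun h => hix (h ▸ c.start_mem_support)
        obtain ⟨q, hq⟩ := exists_lift_walk c hxne hxne (fun y hy hyi => hix (hyi ▸ hy))
        have hq' : (q.map (SimpleGraph.Hom.comap Subtype.val (attachLeaf i T' k hk))).IsCycle := by
          rw [hq]; exact hc
        have hqc : q.IsCycle :=
          (SimpleGraph.Walk.map_isCycle_iff_of_injective (fun a b hab => Subtype.ext hab)).mp hq'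
        have hacy' : ((attachLeaf i T' k hk).comap
            (Subtype.val : {j : V // j ≠ i} → V)).IsAcyclic := by
          rw [hcm]; exact hT'.2
        exact hacy' _ hqc
    have hnoadj : ∀ z, ¬((attachLeaf i T' k hk).deleteEdges {s(i, k)}).Adj i z := by
      intro z hz
      rw [SimpleGraph.deleteEdges_adj] at hz
      exact hz.2 (by rw [hnbB z hz.1]; exact Set.mem_singleton _)
    have hcompi2 : ∀ w, ((attachLeaf i T' k hk).deleteEdges {s(i, k)}).Reachable i w → w = i := by
      intro w hw
      obtain ⟨p⟩ := hw
      cases p with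
      | nil => rfl
      | cons h q => exact absurd h (hnoadj _)
    have hcompk : ∀ w, w ≠ i → ((attachLeaf i T' k hk).deleteEdges {s(i, k)}).Reachable k w := by
      intro w hw
      obtain ⟨p⟩ := hT'.1.preconnected ⟨k, hk⟩ ⟨w, hw⟩
      refine transfer_reach Subtype.val Set.univ ?_ p (fun _ _ => trivial)
      intro x y _ _ hxy
      rw [SimpleGraph.deleteEdges_adj]
      refine ⟨Or.inl ⟨x.2, y.2, hxy⟩, ?_⟩
      simp only [Set.mem_singleton_iff, Sym2.eq_iff]
      push_neg
      exact ⟨fun h => absurd h x.2, fun _ => y.2⟩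
    have hcompk' : ∀ w, ((attachLeaf i T' k hk).deleteEdges {s(i, k)}).Reachable k w → w ≠ i := by
      intro w hw hwi
      subst hwi
      exact hk (hcompi2 k hw.symm)
    refine ⟨attachLeaf i T' k hk, ⟨hconnB, hacy⟩, ?_⟩
    intro a b hab
    by_cases hab1 : P i a b ∧ ∀ j, j ≠ i → P j b a
    · refine Or.inr (Or.inr ⟨i, k, hadjik, ?_, ?_⟩)
      · ext w
        simp only [Set.mem_setOf_eq]
        constructor
        · intro hw
          have hwi : w = i := by
            by_contra hwi
            exact asymP w b a (hab1.2 w hwi) hw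
          rw [hwi]
        · intro hw
          rw [hcompi2 w hw]
          exact hab1.1
      · ext w
        simp only [Set.mem_setOf_eq]
        constructor
        · intro hw
          exact hcompk w (fun h => asymP i a b hab1.1 (h ▸ hw))
        · intro hw
          exact hab1.2 w (hcompk' w hw)
    · by_cases hab2 : P i b a ∧ ∀ j, j ≠ i → P j a b
      · refine Or.inr (Or.inr ⟨k, i, hadjik.symm, ?_, ?_⟩)
        · rw [show (s(k, i) : Sym2 V) = s(i, k) from Sym2.eq_swap]
          ext w
          simp only [Set.mem_setOf_eq]
          constructor
          · intro hw
            exact hcompk w (fun h => asymP i b a hab2.1 (h ▸ hw))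
          · intro hw
            exact hab2.2 w (hcompk' w hw)
        · rw [show (s(k, i) : Sym2 V) = s(i, k) from Sym2.eq_swap]
          ext w
          simp only [Set.mem_setOf_eq]
          constructor
          · intro hw
            have hwi : w = i := by
              by_contra hwi
              exact asymP w a b (hab2.2 w hwi) hw
            rw [hwi]
          · intro hw
            rw [hcompi2 w hw]
            exact hab2.1
      · have hiff_ab : P i a b ↔ P k a b := hkag a b hab1 hab2
        have hiff_ba : P i b a ↔ P k b a := hkag b a hab2 hab1
        rcases hsc' a b hab with h | h | ⟨u', v', huv', hA', hB'⟩
        · refine Or.inl fun j => ?_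
          by_cases hj : j = i
          · rw [hj]; exact hiff_ab.mpr (h ⟨k, hk⟩)
          · exact h ⟨j, hj⟩
        · refine Or.inr (Or.inl fun j => ?_)
          by_cases hj : j = i
          · rw [hj]; exact hiff_ba.mpr (h ⟨k, hk⟩)
          · exact h ⟨j, hj⟩
        · have hnbGd : ∀ z, ((attachLeaf i T' k hk).deleteEdges {s(u'.1, v'.1)}).Adj i z → z = k :=
            fun z hz => hnbB z ((SimpleGraph.deleteEdges_adj).mp hz).1
          have hik' : ((attachLeaf i T' k hk).deleteEdges {s(u'.1, v'.1)}).Adj i k := by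
            rw [SimpleGraph.deleteEdges_adj]
            refine ⟨hadjik, ?_⟩
            simp only [Set.mem_singleton_iff, Sym2.eq_iff]
            push_neg
            exact ⟨fun h => absurd h.symm u'.2, fun h => absurd h.symm v'.2⟩
          refine Or.inr (Or.inr ⟨u'.1, v'.1, ?_, ?_, ?_⟩)
          · exact huv'
          · ext w
            simp only [Set.mem_setOf_eq]
            by_cases hw : w = i
            · rw [hw, reach_leaf_iff hnbGd hik' u'.2]
              exact hiff_ab.trans ((Set.ext_iff.mp hA' ⟨k, hk⟩).trans
                (mem_reach_del_comap_iff u'.2 v'.2 u'.2 hnbB ⟨k, hk⟩))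
            · exact (Set.ext_iff.mp hA' ⟨w, hw⟩).trans
                (mem_reach_del_comap_iff u'.2 v'.2 u'.2 hnbB ⟨w, hw⟩)
          · ext w
            simp only [Set.mem_setOf_eq]
            by_cases hw : w = i
            · rw [hw, reach_leaf_iff hnbGd hik' v'.2]
              exact hiff_ba.trans ((Set.ext_iff.mp hB' ⟨k, hk⟩).trans
                (mem_reach_del_comap_iff u'.2 v'.2 v'.2 hnbB ⟨k, hk⟩))
            · exact (Set.ext_iff.mp hB' ⟨w, hw⟩).trans
                (mem_reach_del_comap_iff u'.2 v'.2 v'.2 hnbB ⟨w, hw⟩)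
end

section
/- For a classically single-crossing profile (single-crossing on a line of voters) with an odd number n of voters, the preference order of the median voter (voter (n+1)/2) coincides with the strict majority relation. -/
theorem stmt18 {n : ℕ} (hn : Odd n) {A : Type*}
    (P : Fin n → A → A → Prop) (hP : ∀ i, IsStrictTotalOrder A (P i))
    (hsc : SCLine P) :
    ∀ a b : A, P ⟨n / 2, Nat.div_lt_self hn.pos one_lt_two⟩ a b ↔
      2 * Nat.card {j : Fin n // P j a b} > n := by
  classical
  intro a b
  set m : Fin n := ⟨n / 2, Nat.div_lt_self hn.pos one_lt_two⟩ with hm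
  have hmval : (m : ℕ) = n / 2 := rfl
  have hn2 : n = 2 * (n / 2) + 1 := by
    have h1 := Nat.div_add_mod n 2
    have h2 : n % 2 = 1 := Nat.odd_iff.mp hn
    omega
  have hcard : Nat.card {j : Fin n // P j a b}
      = (Finset.univ.filter (fun j => P j a b)).card := by
    rw [Nat.card_eq_fintype_card, Fintype.card_subtype]
  rw [hcard]
  constructor
  · intro h
    rcases hsc a b with hup | hdown
    · have hsub : Finset.Ici m ⊆ Finset.univ.filter (fun j => P j a b) := by
        intro j hj
        simp only [Finset.mem_Ici] at hj
        simp only [Finset.mem_filter, Finset.mem_univ, true_and]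
        exact hup m j hj h
      have hle := Finset.card_le_card hsub
      rw [Fin.card_Ici, hmval] at hle
      omega
    · have hsub : Finset.Iic m ⊆ Finset.univ.filter (fun j => P j a b) := by
        intro j hj
        simp only [Finset.mem_Iic] at hj
        simp only [Finset.mem_filter, Finset.mem_univ, true_and]
        exact hdown j m hj h
      have hle := Finset.card_le_card hsub
      rw [Fin.card_Iic, hmval] at hle
      omega
  · intro h
    by_contra hcon
    rcases hsc a b with hup | hdown
    · have hsub : Finset.univ.filter (fun j => P j a b) ⊆ Finset.Ioi m := by
        intro j hj
        simp only [Finset.mem_filter, Finset.mem_univ, true_and] at hj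
        simp only [Finset.mem_Ioi]
        by_contra hjm
        exact hcon (hup j m (le_of_not_gt hjm) hj)
      have hle := Finset.card_le_card hsub
      rw [Fin.card_Ioi, hmval] at hle
      omega
    · have hsub : Finset.univ.filter (fun j => P j a b) ⊆ Finset.Iio m := by
        intro j hj
        simp only [Finset.mem_filter, Finset.mem_univ, true_and] at hj
        simp only [Finset.mem_Iio]
        by_contra hjm
        exact hcon (hdown m j (le_of_not_gt hjm) hj)
      have hle := Finset.card_le_card hsub
      rw [Fin.card_Iio, hmval] at hle
      omega
end

section
/- Let T be a tree on voter set V, and P a profile single-crossing with respect to T. If vertex i of T has degree at least 3, with three distinct neighbors j, k, ℓ, then the 3-voter subprofile (P_j, P_k, P_ℓ) is not single-crossing with respect to any tree on 3 vertices, provided P_j, P_k, P_ℓ are pairwise distinct and T is minimal for P. -/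
theorem stmt19 {V A : Type*} (T : SimpleGraph V) (hT : T.IsTree)
    (P : V → A → A → Prop) (hP : ∀ i, IsStrictTotalOrder A (P i))
    (hsc : SingleCrossing T P) (hmin : MinimalTree T P)
    (i j k l : V) (hjk : j ≠ k) (hjl : j ≠ l) (hkl : k ≠ l)
    (hij : T.Adj i j) (hik : T.Adj i k) (hil : T.Adj i l)
    (hd1 : P j ≠ P k) (hd2 : P j ≠ P l) (hd3 : P k ≠ P l) :
    ¬∃ T₃ : SimpleGraph (Fin 3), T₃.IsTree ∧ SingleCrossing T₃ ![P j, P k, P l] := by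
  have asym : ∀ (m : V) (a b : A), P m a b → P m b a → False := by
    intro m a b h1 h2
    exact (hP m).toIsStrictOrder.toIrrefl.irrefl a
      ((hP m).toIsStrictOrder.toIsTrans.trans a b a h1 h2)
  -- For each neighbor x of i, a pair separating x from the other two neighbors.
  have side : ∀ x y z : V, y ≠ x → z ≠ x →
      T.Adj i x → T.Adj i y → T.Adj i z →
      ∃ a b, P x a b ∧ P y b a ∧ P z b a := by
    intro x y z hyx hzx hx hy hz
    obtain ⟨a, b, hadj, h1, h2⟩ := hmin x i hx.symm
    refine ⟨a, b, ?_, ?_, ?_⟩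
    · have hm : x ∈ {w | (T.deleteEdges {s(x, i)}).Reachable x w} :=
        SimpleGraph.Reachable.refl x
      rw [← h1] at hm; exact hm
    · have hyadj : (T.deleteEdges {s(x, i)}).Adj i y := by
        rw [SimpleGraph.deleteEdges_adj]
        refine ⟨hy, ?_⟩
        simp only [Set.mem_singleton_iff, Sym2.eq_iff]
        rintro (⟨h1', h2'⟩ | ⟨h1', h2'⟩)
        · exact hx.ne h1'
        · exact hyx h2'
      have hm : y ∈ {w | (T.deleteEdges {s(x, i)}).Reachable i w} := hyadj.reachable
      rw [← h2] at hm; exact hm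
    · have hzadj : (T.deleteEdges {s(x, i)}).Adj i z := by
        rw [SimpleGraph.deleteEdges_adj]
        refine ⟨hz, ?_⟩
        simp only [Set.mem_singleton_iff, Sym2.eq_iff]
        rintro (⟨h1', h2'⟩ | ⟨h1', h2'⟩)
        · exact hx.ne h1'
        · exact hzx h2'
      have hm : z ∈ {w | (T.deleteEdges {s(x, i)}).Reachable i w} := hzadj.reachable
      rw [← h2] at hm; exact hm
  obtain ⟨a1, b1, hj1, hk1, hl1⟩ := side j k l hjk.symm hjl.symm hij hik hil
  obtain ⟨a2, b2, hk2, hj2, hl2⟩ := side k j l hjk hkl.symm hik hij hil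
  obtain ⟨a3, b3, hl3, hj3, hk3⟩ := side l j k hjl hkl hil hij hik
  rintro ⟨T₃, hT₃, hsc3⟩
  have asymQ : ∀ (s : Fin 3) (a b : A),
      ![P j, P k, P l] s a b → ![P j, P k, P l] s b a → False := by
    intro s
    fin_cases s
    · exact fun a b => asym j a b
    · exact fun a b => asym k a b
    · exact fun a b => asym l a b
  -- If voter t strictly prefers a to b and is the only one, then t is a leaf of T₃.
  have leaf : ∀ (a b : A) (t : Fin 3), (![P j, P k, P l] t a b) →
      (∀ s, s ≠ t → ¬ ![P j, P k, P l] s a b) →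
      ∃ v, T₃.Adj t v ∧ ∀ w, T₃.Adj t w → w = v := by
    intro a b t ht hothers
    rcases hsc3 a b (fun hab => by subst hab; exact asymQ t a a ht ht) with h | h | ⟨u, v, hadj, h1, h2⟩
    · obtain ⟨s, hs⟩ := exists_ne t
      exact absurd (h s) (hothers s hs)
    · exact absurd (h t) (fun hh => asymQ t a b ht hh)
    · have hu : ![P j, P k, P l] u a b := by
        have hm : u ∈ {w | (T₃.deleteEdges {s(u, v)}).Reachable u w} :=
          SimpleGraph.Reachable.refl u
        rw [← h1] at hm; exact hm
      have hut : u = t := by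
        by_contra hc
        exact hothers u hc hu
      subst hut
      refine ⟨v, hadj, fun w hw => ?_⟩
      by_contra hwv
      have hwadj : (T₃.deleteEdges {s(u, v)}).Adj u w := by
        rw [SimpleGraph.deleteEdges_adj]
        refine ⟨hw, ?_⟩
        simp only [Set.mem_singleton_iff, Sym2.eq_iff]
        rintro (⟨h1', h2'⟩ | ⟨h1', h2'⟩)
        · exact hwv h2'
        · exact hadj.ne h1'
      have hm : w ∈ {w' | (T₃.deleteEdges {s(u, v)}).Reachable u w'} := hwadj.reachable
      rw [← h1] at hm
      have : w = u := by
        by_contra hc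
        exact hothers w hc hm
      exact hw.ne this.symm
  have d0 : ∃ v, T₃.Adj 0 v ∧ ∀ w, T₃.Adj 0 w → w = v := by
    refine leaf a1 b1 0 (by simpa using hj1) ?_
    intro s hs
    fin_cases s
    · exact absurd rfl hs
    · simp only [Matrix.cons_val_one, Matrix.head_cons]
      exact fun h => asym k a1 b1 h hk1
    · simp only [Matrix.cons_val_two, Matrix.tail_cons, Matrix.head_cons]
      exact fun h => asym l a1 b1 h hl1
  have d1 : ∃ v, T₃.Adj 1 v ∧ ∀ w, T₃.Adj 1 w → w = v := by
    refine leaf a2 b2 1 (by simpa using hk2) ?_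
    intro s hs
    fin_cases s
    · simp only [Matrix.cons_val_zero]
      exact fun h => asym j a2 b2 h hj2
    · exact absurd rfl hs
    · simp only [Matrix.cons_val_two, Matrix.tail_cons, Matrix.head_cons]
      exact fun h => asym l a2 b2 h hl2
  have d2 : ∃ v, T₃.Adj 2 v ∧ ∀ w, T₃.Adj 2 w → w = v := by
    refine leaf a3 b3 2 (by simpa using hl3) ?_
    intro s hs
    fin_cases s
    · simp only [Matrix.cons_val_zero]
      exact fun h => asym j a3 b3 h hj3
    · simp only [Matrix.cons_val_one, Matrix.head_cons]
      exact fun h => asym k a3 b3 h hk3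
    · exact absurd rfl hs
  obtain ⟨v0, av0, uv0⟩ := d0
  obtain ⟨v1, av1, uv1⟩ := d1
  obtain ⟨v2, av2, uv2⟩ := d2
  fin_cases v0
  · exact T₃.irrefl av0
  · -- v0 = 1
    fin_cases v2
    · exact absurd (uv0 _ av2.symm) (by decide)
    · have h10 : (0 : Fin 3) = v1 := uv1 _ av0.symm
      have h21 : (2 : Fin 3) = v1 := uv1 _ av2.symm
      exact absurd (h21.trans h10.symm) (by decide)
    · exact T₃.irrefl av2
  · -- v0 = 2
    fin_cases v1
    · exact absurd (uv0 _ av1.symm) (by decide)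
    · exact T₃.irrefl av1
    · have h20 : (0 : Fin 3) = v2 := uv2 _ av0.symm
      have h12 : (1 : Fin 3) = v2 := uv2 _ av1.symm
      exact absurd (h12.trans h20.symm) (by decide)
end
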